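/- arXiv:2206.04815 — 7 statements merged into one kernel-verified Lean document; each statement's English description precedes it below -/
import Mathlib

section
/- Let G be a bipartite graph on parts [m] and [n] with m ≤ n, and let S_G ≤ M(m×n, F) be the span of elementary matrices E_{i,j} over edges (i,j) of G. Then for each r ∈ [m], the matching number of G is at most r if and only if every matrix in S_G has rank at most r. -/
open Matrix

/-- The graphical matrix space of a bipartite graph with edge set `E ⊆ [m] × [n]`:
the span of the elementary matrices over the edges. -/
def graphSpace (F : Type*) [Field F] {m n : ℕ} (E : Finset (Fin m × Fin n)) :
    Submodule F (Matrix (Fin m) (Fin n) F) :=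
  Submodule.span F ((fun e => Matrix.single e.1 e.2 (1 : F)) '' (E : Set (Fin m × Fin n)))

/-- A set of edges is a matching if no two distinct edges share a vertex. -/
def IsMatching {m n : ℕ} (M : Finset (Fin m × Fin n)) : Prop :=
  ∀ e ∈ M, ∀ f ∈ M, e ≠ f → e.1 ≠ f.1 ∧ e.2 ≠ f.2

/-!
A matrix of rank `k` has a nonsingular `k × k` submatrix, and by the Leibniz expansion of its
determinant some permutation picks out `k` nonzero entries, no two in a common row or column.
For a matrix of the graphical space these entries are edges, so they form a matching of size `k`.
Conversely, the biadjacency matrix of a matching `M` lies in the space and contains the `|M| × |M|`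
identity matrix as a submatrix, so its rank is at least `|M|`.
-/

namespace Matrix

variable {m n K : Type*} [Fintype n] [Field K]

theorem exists_injective_linearIndependent_cols (A : Matrix m n K) {k : ℕ} (hk : A.rank = k) :
    ∃ c : Fin k → n, Function.Injective c ∧ LinearIndependent K (A.col ∘ c) := by
  obtain ⟨κ, a, ha, hspan, hli⟩ := exists_linearIndependent' K A.col
  have : Fintype κ := Fintype.ofInjective a ha
  have hcard : Fintype.card κ = k := by
    rw [← hk, rank_eq_finrank_span_cols, ← hspan, finrank_span_eq_card hli]
  let e : Fin k ≃ κ := (Fintype.equivFinOfCardEq hcard).symm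
  exact ⟨a ∘ e, ha.comp e.injective, hli.comp e e.injective⟩

theorem exists_submatrix_det_ne_zero [Fintype m] (A : Matrix m n K) :
    ∃ r : Fin A.rank → m, ∃ c : Fin A.rank → n, Function.Injective r ∧ Function.Injective c ∧
      (A.submatrix r c).det ≠ 0 := by
  obtain ⟨c, hc, hli⟩ := A.exists_injective_linearIndependent_cols rfl
  have hrank : (A.submatrix id c)ᵀ.rank = A.rank := by
    rw [rank_transpose, rank_eq_finrank_span_cols]
    exact (finrank_span_eq_card hli).trans (Fintype.card_fin _)
  obtain ⟨r, hr, hli'⟩ := (A.submatrix id c)ᵀ.exists_injective_linearIndependent_cols hrank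
  have hunit : IsUnit (A.submatrix r c) := linearIndependent_rows_iff_isUnit.1 hli'
  exact ⟨r, c, hr, hc, ((isUnit_iff_isUnit_det _).1 hunit).ne_zero⟩

theorem exists_perm_forall_ne_zero_of_det_ne_zero {R : Type*} [CommRing R] [DecidableEq n]
    {A : Matrix n n R} (h : A.det ≠ 0) : ∃ σ : Equiv.Perm n, ∀ i, A (σ i) i ≠ 0 := by
  rw [det_apply] at h
  obtain ⟨σ, -, hσ⟩ := Finset.exists_ne_zero_of_sum_ne_zero h
  refine ⟨σ, fun i hi => hσ ?_⟩
  rw [Finset.prod_eq_zero (f := fun j => A (σ j) j) (Finset.mem_univ i) hi, smul_zero]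

theorem card_le_rank_of_submatrix_eq_one {R : Type*} [CommRing R] [StrongRankCondition R]
    {k : Type*} [Fintype k] [DecidableEq k] {A : Matrix m n R} {r : k → m} {c : k → n}
    (h : A.submatrix r c = 1) : Fintype.card k ≤ A.rank := by
  simpa [h, rank_one] using A.rank_submatrix_le r c

end Matrix

section GraphSpace

variable {F : Type*} [Field F] {m n : ℕ} {E M : Finset (Fin m × Fin n)}

theorem mem_graphSpace_iff {B : Matrix (Fin m) (Fin n) F} :
    B ∈ graphSpace F E ↔ ∀ i j, B i j ≠ 0 → (i, j) ∈ E := by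
  constructor
  · intro hB i j
    contrapose!
    intro hE
    induction hB using Submodule.span_induction with
    | mem x hx =>
      obtain ⟨e, he, rfl⟩ := hx
      apply single_apply_of_ne
      rintro ⟨rfl, rfl⟩
      exact hE he
    | zero => rfl
    | add x y _ _ hx hy => simp [hx, hy]
    | smul a x _ hx => simp [hx]
  · intro hB
    rw [matrix_eq_sum_single B]
    refine Submodule.sum_mem _ fun i _ => Submodule.sum_mem _ fun j _ => ?_
    by_cases hij : B i j = 0
    · simp [hij]
    · rw [← mul_one (B i j), ← smul_eq_mul, ← smul_single]
      exact Submodule.smul_mem _ _ (Submodule.subset_span ⟨(i, j), hB i j hij, rfl⟩)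

theorem isMatching_image_of_injective {k : ℕ} {r : Fin k → Fin m} {c : Fin k → Fin n}
    (hr : Function.Injective r) (hc : Function.Injective c) :
    IsMatching (Finset.univ.image fun i => (r i, c i)) := by
  simp only [IsMatching, Finset.mem_image, Finset.mem_univ, true_and]
  rintro _ ⟨i, rfl⟩ _ ⟨j, rfl⟩ hne
  have hij : i ≠ j := by rintro rfl; exact hne rfl
  exact ⟨hr.ne hij, hc.ne hij⟩

theorem exists_isMatching_card_eq_rank {B : Matrix (Fin m) (Fin n) F} (hB : B ∈ graphSpace F E) :
    ∃ M ⊆ E, IsMatching M ∧ M.card = B.rank := by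
  obtain ⟨r, c, hr, hc, hdet⟩ := B.exists_submatrix_det_ne_zero
  obtain ⟨σ, hσ⟩ := exists_perm_forall_ne_zero_of_det_ne_zero hdet
  refine ⟨Finset.univ.image fun i => (r (σ i), c i), ?_,
    isMatching_image_of_injective (hr.comp σ.injective) hc, ?_⟩
  · simp only [Finset.subset_iff, Finset.mem_image, Finset.mem_univ, true_and]
    rintro _ ⟨i, rfl⟩
    exact mem_graphSpace_iff.1 hB _ _ (hσ i)
  · rw [Finset.card_image_of_injective _ fun i j hij => hc (congrArg Prod.snd hij),
      Finset.card_univ, Fintype.card_fin]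

theorem IsMatching.mk_mem_iff (hM : IsMatching M) {e f : Fin m × Fin n} (he : e ∈ M)
    (hf : f ∈ M) : (e.1, f.2) ∈ M ↔ e = f := by
  refine ⟨fun h => ?_, by rintro rfl; exact he⟩
  by_cases hef : e = (e.1, f.2)
  · by_contra hne
    exact (hM e he f hf hne).2 (congrArg Prod.snd hef :)
  · exact absurd rfl (hM e he _ h hef).1

variable (F) in
def biadjacencyMatrix (M : Finset (Fin m × Fin n)) : Matrix (Fin m) (Fin n) F :=
  of fun i j => if (i, j) ∈ M then 1 else 0

theorem biadjacencyMatrix_mem_graphSpace (h : M ⊆ E) : biadjacencyMatrix F M ∈ graphSpace F E :=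
  mem_graphSpace_iff.2 fun i j hij => h (by by_contra hij'; simp [biadjacencyMatrix, hij'] at hij)

theorem IsMatching.card_le_rank_biadjacencyMatrix (hM : IsMatching M) :
    M.card ≤ (biadjacencyMatrix F M).rank := by
  let e : Fin M.card ≃ M := M.equivFin.symm
  have hsub : (biadjacencyMatrix F M).submatrix (fun i => (e i).1.1) (fun j => (e j).1.2) = 1 := by
    ext i j
    simp only [biadjacencyMatrix, submatrix_apply, of_apply, one_apply,
      hM.mk_mem_iff (e i).2 (e j).2, Subtype.val_inj, e.apply_eq_iff_eq]
  simpa using card_le_rank_of_submatrix_eq_one hsub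

end GraphSpace

theorem stmt_0_general (F : Type*) [Field F] (m n : ℕ)
    (E : Finset (Fin m × Fin n)) (r : ℕ) :
    (∀ M ⊆ E, IsMatching M → M.card ≤ r) ↔
      (∀ B ∈ graphSpace F E, B.rank ≤ r) := by
  constructor
  · intro hM B hB
    obtain ⟨M, hME, hMatch, hcard⟩ := exists_isMatching_card_eq_rank hB
    exact hcard ▸ hM M hME hMatch
  · intro hB M hME hM
    exact hM.card_le_rank_biadjacencyMatrix.trans (hB _ (biadjacencyMatrix_mem_graphSpace hME))

theorem stmt_0 (F : Type*) [Field F] (m n : ℕ) (hmn : m ≤ n)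
    (E : Finset (Fin m × Fin n)) (r : ℕ) (hr1 : 1 ≤ r) (hrm : r ≤ m) :
    (∀ M ⊆ E, IsMatching M → M.card ≤ r) ↔
      (∀ B ∈ graphSpace F E, B.rank ≤ r) :=
  stmt_0_general F m n E r
end

section
/- Given matrices A_1, …, A_d ∈ M(m×n, F) with pairwise distinct lexicographically-first nonzero positions p(A_1), …, p(A_d), let B ∈ M(m×n, F) be the 0-1 matrix with 1 exactly in the positions p(A_1), …, p(A_d). Then the linear span of A_1, …, A_d contains a matrix of rank at least ρ(B), where ρ(B) is the minimum number of rows and columns needed to cover all nonzero entries of B. -/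
/-!
Take a minimum cover of the positions `p k` by `ρ` rows and columns. By Kőnig's theorem
(derived here from Hall's) there are `ρ` of these positions `p k₁, …, p k_ρ`, listed with
increasing rows, in pairwise distinct rows and columns. On the `ρ × ρ` submatrix on these
rows and columns, `A kₛ` vanishes in the rows before the `s`-th one, while the matrix formed
by the `s`-th row of `A kₛ` for every `s` is triangular with nonzero diagonal once the columns
are sorted. Choosing the coefficients of `∑ cₛ A kₛ` one at a time, each affecting the
determinant affinely, makes the submatrix invertible.
-/

open Matrix Function Finset

def IsBipartiteCover {α β : Type*} (r : α → β → Prop) (R : Finset α) (C : Finset β) : Prop :=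
  ∀ i j, r i j → i ∈ R ∨ j ∈ C

section Konig

variable {α β : Type*} {r : α → β → Prop} {R : Finset α} {C : Finset β}

theorem isBipartiteCover_flip : IsBipartiteCover (flip r) C R ↔ IsBipartiteCover r R C :=
  ⟨fun h i j hij => (h j i hij).symm, fun h j i hij => (h i j hij).symm⟩

theorem IsBipartiteCover.exists_injective_of_min [Fintype β] (hcov : IsBipartiteCover r R C)
    (hmin : ∀ R' C', IsBipartiteCover r R' C' → #R + #C ≤ #R' + #C') :
    ∃ f : R → β, Injective f ∧ ∀ i : R, r i (f i) ∧ f i ∉ C := by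
  classical
  let t : R → Finset β := fun i => {j | r i j ∧ j ∉ C}
  obtain ⟨f, hf, hft⟩ := (all_card_le_biUnion_card_iff_exists_injective t).1 fun s => by
    let S := s.map (Embedding.subtype _)
    have hSR : S ⊆ R := fun i hi => by
      obtain ⟨i, -, rfl⟩ := mem_map.1 hi
      exact i.2
    -- Hall's condition: trading the rows of `s` for their neighbours outside `C` gives a cover,
    -- which is no smaller than the minimum one
    have hcov' : IsBipartiteCover r (R \ S) (C ∪ s.biUnion t) := by
      intro i j hij
      by_cases hj : j ∈ C
      · exact .inr (mem_union_left _ hj)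
      have hi : i ∈ R := (hcov i j hij).resolve_right hj
      by_cases his : ⟨i, hi⟩ ∈ s
      · exact .inr (mem_union_right _ (mem_biUnion.2 ⟨_, his, by simp [t, hij, hj]⟩))
      · exact .inl (mem_sdiff.2 ⟨hi, by simpa [S] using fun _ => his⟩)
    have := hmin _ _ hcov'
    have := card_sdiff_add_card_eq_card hSR
    have := card_union_le C (s.biUnion t)
    simp only [S, card_map] at *
    omega
  exact ⟨f, hf, fun i => by simpa [t] using hft i⟩

theorem IsBipartiteCover.exists_matching_of_min [Fintype α] [Fintype β]
    (hcov : IsBipartiteCover r R C)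
    (hmin : ∀ R' C', IsBipartiteCover r R' C' → #R + #C ≤ #R' + #C') :
    ∃ e : R ⊕ C → α × β,
      Injective (Prod.fst ∘ e) ∧ Injective (Prod.snd ∘ e) ∧ ∀ x, r (e x).1 (e x).2 := by
  obtain ⟨f, hf, hfr⟩ := hcov.exists_injective_of_min hmin
  obtain ⟨g, hg, hgr⟩ := (isBipartiteCover_flip.2 hcov).exists_injective_of_min fun R' C' h => by
    have := hmin _ _ (isBipartiteCover_flip.1 h)
    omega
  refine ⟨Sum.elim (fun i => (i, f i)) (fun j => (g j, j)), ?_, ?_, ?_⟩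
  · rw [Sum.comp_elim]
    exact Subtype.val_injective.sumElim hg fun i j h =>
      (hgr j).2 ((show (i : α) = g j from h) ▸ i.2)
  · rw [Sum.comp_elim]
    exact hf.sumElim Subtype.val_injective fun i j h => (hfr i).2 ((show f i = j from h) ▸ j.2)
  · rintro (i | j)
    exacts [(hfr i).1, (hgr j).1]

end Konig

theorem Matrix.BlockTriangular.det_eq_prod_diag_of_injective {R ι γ : Type*} [CommRing R]
    [Fintype ι] [DecidableEq ι] [LinearOrder γ] {M : Matrix ι ι R} {b : ι → γ}
    (h : M.BlockTriangular b) (hb : Injective b) : M.det = ∏ i, M i i := by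
  classical
  let e := Equiv.ofInjective b hb
  have hup : (reindex e e M).IsUpperTriangular := blockTriangular_reindex_iff.2 h
  rw [← det_reindex_self e, det_of_isUpperTriangular hup]
  exact Fintype.prod_equiv e.symm _ _ fun _ => rfl

section Field

variable {F : Type*} [Field F]

theorem exists_det_sum_smul_ne_zero {ι : Type*} [Fintype ι] [DecidableEq ι] [LinearOrder ι]
    (V : ι → Matrix ι ι F) (hV : ∀ s u, u < s → V s u = 0)
    (hdiag : (of fun u => V u u).det ≠ 0) :
    ∃ c : ι → F, (∑ s, c s • V s).det ≠ 0 := by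
  suffices h : ∀ D : Finset ι, ∃ c : ι → F,
      (of fun u => if u ∈ D then (∑ s, c s • V s) u else V u u).det ≠ 0 by
    obtain ⟨c, hc⟩ := h univ
    simp only [mem_univ, if_true] at hc
    exact ⟨c, hc⟩
  intro D
  induction D using Finset.induction_on_max with
  | empty => exact ⟨0, by simpa using hdiag⟩
  | insert a D hlt ih =>
    obtain ⟨c, hc⟩ := ih
    have haD : a ∉ D := fun h => (hlt a h).false
    set N := ∑ s, update c a 0 s • V s
    set G : Matrix ι ι F := of fun u => if u ∈ D then N u else V u u
    have hsum : ∀ t, ∑ s, update c a t s • V s = N + t • V a := by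
      intro t
      have hsplit : ∀ s, update c a t s • V s =
          update c a 0 s • V s + (Pi.single a t : ι → F) s • V s := by
        intro s
        rcases eq_or_ne s a with rfl | hs <;> simp [*]
      simp [hsplit, sum_add_distrib, N, Pi.single_apply]
    have hcG : (of fun u => if u ∈ D then (∑ s, c s • V s) u else V u u) = G := by
      have hc := hsum (c a)
      rw [update_eq_self] at hc
      ext u b
      by_cases hu : u ∈ D
      · simp [G, hc, hu, hV a u (hlt u hu)]
      · simp [G, hu]
    have hstep : ∀ t, (of fun u => if u ∈ insert a D then (∑ s, update c a t s • V s) u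
        else V u u) = G.updateRow a (N a + t • G a) := by
      intro t
      ext u b
      rcases eq_or_ne u a with rfl | hua
      · simp [G, hsum, haD]
      by_cases hu : u ∈ D
      · simp [G, hsum, hu, hua, hV a u (hlt u hu)]
      · simp [G, hu, hua]
    -- the coefficient of `V a` only enters row `a`, so the determinant is affine in it
    obtain ⟨t, ht⟩ : ∃ t, (G.updateRow a (N a)).det + t * G.det ≠ 0 := by
      by_contra! h
      exact hc (hcG ▸ by linear_combination h 1 - h 0)
    refine ⟨update c a t, ?_⟩
    rwa [hstep, det_updateRow_add, det_updateRow_smul, updateRow_eq_self]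

section Staircase

variable {m n : Type*} [Fintype n] [LinearOrder m] [LinearOrder n]

theorem exists_mem_span_card_le_rank_of_strictMono {ι : Type*} [Fintype ι] [LinearOrder ι]
    (A : ι → Matrix m n F) (row : ι → m) (col : ι → n) (hrow : StrictMono row)
    (hcol : Injective col) (hpiv : ∀ u, A u (row u) (col u) ≠ 0)
    (hlex : ∀ u i j, A u i j ≠ 0 → row u < i ∨ row u = i ∧ col u ≤ j) :
    ∃ M ∈ Submodule.span F (Set.range A), Fintype.card ι ≤ M.rank := by
  classical
  let V : ι → Matrix ι ι F := fun s => (A s).submatrix row col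
  have hV : ∀ s u, u < s → V s u = 0 := by
    intro s u hus
    ext b
    by_contra hne
    rcases hlex s _ _ hne with h | ⟨h, -⟩
    · exact (hrow hus).not_gt h
    · exact (hrow hus).ne' h
  have htri : (of fun u => V u u).BlockTriangular col := by
    intro u b hb
    by_contra hne
    rcases hlex u _ _ hne with h | ⟨-, h⟩
    · exact h.false
    · exact hb.not_ge h
  obtain ⟨c, hc⟩ := exists_det_sum_smul_ne_zero V hV <| by
    rw [htri.det_eq_prod_diag_of_injective hcol]
    exact prod_ne_zero_iff.2 fun u _ => hpiv u
  refine ⟨∑ s, c s • A s,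
    sum_mem fun s _ => Submodule.smul_mem _ _ (Submodule.subset_span ⟨s, rfl⟩), ?_⟩
  have hsub : (∑ s, c s • A s).submatrix row col = ∑ s, c s • V s := by
    ext
    simp [V, Matrix.sum_apply]
  calc Fintype.card ι = (∑ s, c s • V s).rank :=
        (rank_of_isUnit _ ((isUnit_iff_isUnit_det _).2 hc.isUnit)).symm
    _ ≤ _ := hsub ▸ rank_submatrix_le _ _ _

theorem exists_mem_span_card_le_rank {κ : Type*} [Fintype κ]
    (A : κ → Matrix m n F) (row : κ → m) (col : κ → n) (hrow : Injective row)
    (hcol : Injective col) (hpiv : ∀ u, A u (row u) (col u) ≠ 0)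
    (hlex : ∀ u i j, A u i j ≠ 0 → row u < i ∨ row u = i ∧ col u ≤ j) :
    ∃ M ∈ Submodule.span F (Set.range A), Fintype.card κ ≤ M.rank := by
  classical
  let e := Equiv.ofInjective row hrow
  have he : ∀ u, row (e.symm u) = u := Equiv.apply_ofInjective_symm hrow
  have := exists_mem_span_card_le_rank_of_strictMono (A ∘ e.symm) Subtype.val (col ∘ e.symm)
    (Subtype.strictMono_coe _) (hcol.comp e.symm.injective)
    (fun u => he u ▸ hpiv (e.symm u)) (fun u => he u ▸ hlex (e.symm u))
  rwa [e.symm.surjective.range_comp, ← Fintype.card_congr e] at this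

end Staircase

end Field

theorem stmt_2_general (F : Type*) [Field F] (m n d : ℕ)
    (A : Fin d → Matrix (Fin m) (Fin n) F) (p : Fin d → Fin m × Fin n)
    -- `p k` is a nonzero position of `A k`
    (hp : ∀ k, A k (p k).1 (p k).2 ≠ 0)
    -- `p k` is the lexicographically first nonzero position of `A k`
    (hlex : ∀ k, ∀ i j, A k i j ≠ 0 → (p k).1 < i ∨ ((p k).1 = i ∧ (p k).2 ≤ j))
    (B : Matrix (Fin m) (Fin n) F)
    (hB : ∀ i j, B i j = if ∃ k, p k = (i, j) then 1 else 0) :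
    ∃ M ∈ Submodule.span F (Set.range A),
      sInf {c : ℕ | ∃ (R : Finset (Fin m)) (C : Finset (Fin n)),
          (∀ i j, B i j ≠ 0 → i ∈ R ∨ j ∈ C) ∧ R.card + C.card = c} ≤ M.rank := by
  obtain ⟨R, C, hcov, hcard⟩ := Nat.sInf_mem (s := {c : ℕ | ∃ (R : Finset (Fin m))
      (C : Finset (Fin n)), IsBipartiteCover (B · · ≠ 0) R C ∧ #R + #C = c})
    ⟨_, univ, ∅, fun i _ _ => .inl (mem_univ i), rfl⟩
  obtain ⟨e, hrow, hcol, he⟩ := hcov.exists_matching_of_min fun R' C' h =>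
    hcard ▸ Nat.sInf_le ⟨R', C', h, rfl⟩
  have hK : ∀ x, ∃ k, p k = e x := fun x => by
    by_contra h
    exact he x (by simpa [hB] using h)
  choose K hK using hK
  obtain ⟨M, hM, hrank⟩ := exists_mem_span_card_le_rank (A ∘ K) _ _ hrow hcol
    (fun x => by simpa [← hK x] using hp (K x)) (fun x => by simpa [← hK x] using hlex (K x))
  refine ⟨M, Submodule.span_mono (Set.range_comp_subset_range K A) hM, ?_⟩
  rwa [Fintype.card_sum, Fintype.card_coe, Fintype.card_coe, hcard] at hrank

/-- Meshulam's lemma: given matrices with pairwise distinct lexicographically-first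
nonzero positions `p k`, and `B` the 0-1 matrix supported exactly on these positions,
the span of the matrices contains a matrix of rank at least `ρ(B)`, the minimum number
of rows and columns covering all nonzero entries of `B`. -/
theorem stmt_2 (F : Type*) [Field F] (m n d : ℕ)
    (A : Fin d → Matrix (Fin m) (Fin n) F) (p : Fin d → Fin m × Fin n)
    -- `p k` is a nonzero position of `A k`
    (hp : ∀ k, A k (p k).1 (p k).2 ≠ 0)
    -- `p k` is the lexicographically first nonzero position of `A k`
    (hlex : ∀ k, ∀ i j, A k i j ≠ 0 → (p k).1 < i ∨ ((p k).1 = i ∧ (p k).2 ≤ j))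
    -- the positions are pairwise distinct
    (hinj : Function.Injective p)
    (B : Matrix (Fin m) (Fin n) F)
    (hB : ∀ i j, B i j = if ∃ k, p k = (i, j) then 1 else 0) :
    ∃ M ∈ Submodule.span F (Set.range A),
      sInf {c : ℕ | ∃ (R : Finset (Fin m)) (C : Finset (Fin n)),
          (∀ i j, B i j ≠ 0 → i ∈ R ∨ j ∈ C) ∧ R.card + C.card = c} ≤ M.rank :=
  stmt_2_general F m n d A p hp hlex B hB
end

section
/- For any matrix space S ≤ M(n, F) in which every matrix is nilpotent, there exists j ∈ [n] such that the standard column basis vector e_j is S-adapted, i.e., no matrix X ∈ S has column span equal to the line spanned by e_j. -/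
open Matrix

/-- The column span of a matrix: the span of its columns in `F^n`. -/
def colSpan (F : Type*) [Field F] {n : ℕ} (X : Matrix (Fin n) (Fin n) F) :
    Submodule F (Fin n → F) :=
  Submodule.span F (Set.range Xᵀ)

/-!
Suppose every `e_j` fails, and pick `X_j ∈ S` with column span `⟨e_j⟩`: its only nonzero row is
row `j`. Draw an edge `j → k` when `X_j j k ≠ 0`; every vertex has an out-edge. Some nonempty set
`D` of vertices has the property that every `k ∈ D` has exactly one in-neighbour `π k` in `D`
(a chordless cycle is an example). Then `B = ∑_{j ∈ D} X_j ∈ S` maps `e_k` to a nonzero multiple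
of `e_{π k}` for each `k ∈ D`, so no power of `B` kills `e_k`, contradicting nilpotency.
-/

namespace Finset

variable {V : Type*} [DecidableEq V] {E : V → V → Prop} {C : Finset V}

theorem erase_nonempty_and_forall_exists_of_notMem_image (hC : C.Nonempty) {σ : V → V}
    (hσ : ∀ j ∈ C, σ j ∈ C ∧ E j (σ j)) {m : V} (hm : m ∉ C.image σ) :
    (C.erase m).Nonempty ∧ ∀ j ∈ C.erase m, ∃ k ∈ C.erase m, E j k := by
  have hσm : ∀ j ∈ C, σ j ∈ C.erase m := fun j hj =>
    mem_erase.mpr ⟨fun h => hm (h ▸ mem_image_of_mem σ hj), (hσ j hj).1⟩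
  obtain ⟨c, hc⟩ := hC
  exact ⟨⟨σ c, hσm c hc⟩, fun j hj =>
    ⟨σ j, hσm j (mem_of_mem_erase hj), (hσ j (mem_of_mem_erase hj)).2⟩⟩

theorem exists_subset_forall_existsUnique_of_forall_exists (E : V → V → Prop) (C : Finset V)
    (hC : C.Nonempty) (hout : ∀ j ∈ C, ∃ k ∈ C, E j k) :
    ∃ D ⊆ C, D.Nonempty ∧ ∀ k ∈ D, ∃! j, j ∈ D ∧ E j k := by
  induction C using Finset.strongInduction with
  | H C ih =>
  by_cases hdrop : ∃ m ∈ C, (C.erase m).Nonempty ∧ ∀ j ∈ C.erase m, ∃ k ∈ C.erase m, E j k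
  · obtain ⟨m, hm, hne, hout'⟩ := hdrop
    obtain ⟨D, hDC, hD⟩ := ih _ (erase_ssubset hm) hne hout'
    exact ⟨D, hDC.trans (erase_subset m C), hD⟩
  -- Now every choice `σ` of out-neighbours is onto `C`, hence injective on `C`; so two
  -- in-neighbours of one vertex cannot both be chosen to point at it.
  have hsurj : ∀ σ : V → V, (∀ j ∈ C, σ j ∈ C ∧ E j (σ j)) → C ⊆ C.image σ :=
    fun σ hσ m hm => by_contra fun hmσ =>
      hdrop ⟨m, hm, erase_nonempty_and_forall_exists_of_notMem_image hC hσ hmσ⟩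
  have hinj : ∀ σ : V → V, (∀ j ∈ C, σ j ∈ C ∧ E j (σ j)) → Set.InjOn σ C := fun σ hσ =>
    card_image_iff.mp (card_image_le.antisymm (card_le_card (hsurj σ hσ)))
  have : Nonempty V := ⟨hC.choose⟩
  choose! σ hσC hσE using hout
  have hσ : ∀ j ∈ C, σ j ∈ C ∧ E j (σ j) := fun j hj => ⟨hσC j hj, hσE j hj⟩
  refine ⟨C, subset_rfl, hC, fun k hk => ?_⟩
  obtain ⟨j, hj, rfl⟩ := mem_image.mp (hsurj σ hσ hk)
  refine ⟨j, ⟨hj, hσE j hj⟩, fun j' ⟨hj', hE⟩ => ?_⟩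
  have hτ : ∀ i ∈ C, Function.update σ j' (σ j) i ∈ C ∧ E i (Function.update σ j' (σ j) i) := by
    intro i hi
    rcases eq_or_ne i j' with rfl | hij
    · simpa using ⟨hσC j hj, hE⟩
    · simpa [hij] using hσ i hi
  by_contra hne
  exact hne (hinj _ hτ hj' hj (by rw [Function.update_self, Function.update_of_ne (Ne.symm hne)]))

end Finset

theorem Matrix.not_isNilpotent_sum_of_existsUnique {ι R : Type*} [Fintype ι] [DecidableEq ι]
    [CommSemiring R] [IsDomain R] (X : ι → Matrix ι ι R)
    (hrow : ∀ j k l, k ≠ j → X j k l = 0) {D : Finset ι} (hD : D.Nonempty)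
    (huniq : ∀ k ∈ D, ∃! j, j ∈ D ∧ X j j k ≠ 0) : ¬ IsNilpotent (∑ j ∈ D, X j) := by
  choose! π hπ hπuniq using huniq
  have hstep : ∀ k ∈ D, (∑ j ∈ D, X j) *ᵥ Pi.single k 1 = X (π k) (π k) k • Pi.single (π k) 1 := by
    intro k hk
    ext i
    rw [mulVec_single_one, col_apply, Matrix.sum_apply, Pi.smul_apply, Pi.single_apply,
      smul_eq_mul, Finset.sum_eq_single (π k)]
    · rcases eq_or_ne i (π k) with rfl | hi
      · simp
      · simp [hi, hrow _ _ _ hi]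
    · intro j hj hjk
      rcases eq_or_ne i j with rfl | hij
      · by_contra hne
        exact hjk (hπuniq k hk i ⟨hj, hne⟩)
      · exact hrow _ _ _ hij
    · exact fun h => absurd (hπ k hk).1 h
  have hpow : ∀ t, ∀ k ∈ D, (∑ j ∈ D, X j) ^ t *ᵥ Pi.single k (1 : R) ≠ 0 := by
    intro t
    induction t with
    | zero =>
      intro k _
      rw [pow_zero, one_mulVec]
      exact Pi.single_ne_zero_iff.mpr one_ne_zero
    | succ t ih =>
      intro k hk
      rw [pow_succ, ← mulVec_mulVec, hstep k hk, mulVec_smul]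
      exact smul_ne_zero (hπ k hk).2 (ih _ (hπ k hk).1)
  rintro ⟨t, ht⟩
  obtain ⟨k, hk⟩ := hD
  exact hpow t k hk (by rw [ht, zero_mulVec])

section ColSpan

variable {F : Type*} [Field F] {n : ℕ} {X : Matrix (Fin n) (Fin n) F} {j : Fin n}

theorem apply_eq_zero_of_colSpan_eq_span_single
    (hX : colSpan F X = Submodule.span F {Pi.single j 1}) {k : Fin n} (hk : k ≠ j) (l : Fin n) :
    X k l = 0 := by
  have hcol : Xᵀ l ∈ Submodule.span F {Pi.single j (1 : F)} := hX ▸ Submodule.subset_span ⟨l, rfl⟩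
  obtain ⟨t, ht⟩ := Submodule.mem_span_singleton.mp hcol
  simpa [hk] using (congrFun ht k).symm

theorem exists_apply_ne_zero_of_colSpan_eq_span_single
    (hX : colSpan F X = Submodule.span F {Pi.single j 1}) : ∃ l, X j l ≠ 0 := by
  by_contra! hrow
  have hbot : colSpan F X = ⊥ := by
    refine Submodule.span_eq_bot.mpr ?_
    rintro _ ⟨l, rfl⟩
    ext k
    rcases eq_or_ne k j with rfl | hk
    · exact hrow l
    · exact apply_eq_zero_of_colSpan_eq_span_single hX hk l
  rw [hX, Submodule.span_singleton_eq_bot] at hbot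
  exact Pi.single_ne_zero_iff.mpr one_ne_zero hbot

end ColSpan

/-- de Seguins Pazzis's lemma: for any nil matrix space `S ≤ M(n, F)` there is `j`
such that the standard basis vector `e_j` is `S`-adapted, i.e. no `X ∈ S` has column
span equal to the line spanned by `e_j`. -/
theorem stmt_7 (F : Type*) [Field F] (n : ℕ) (hn : 0 < n)
    (S : Submodule F (Matrix (Fin n) (Fin n) F))
    (hnil : ∀ B ∈ S, IsNilpotent B) :
    ∃ j : Fin n, ∀ X ∈ S,
      colSpan F X ≠ Submodule.span F {Pi.single j (1 : F)} := by
  by_contra! h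
  choose X hXS hX using h
  obtain ⟨D, -, hD, huniq⟩ := Finset.exists_subset_forall_existsUnique_of_forall_exists
    (fun j k => X j j k ≠ 0) Finset.univ ⟨⟨0, hn⟩, Finset.mem_univ _⟩
    (fun j _ => (exists_apply_ne_zero_of_colSpan_eq_span_single (hX j)).imp
      fun k hk => ⟨Finset.mem_univ k, hk⟩)
  exact Matrix.not_isNilpotent_sum_of_existsUnique X
    (fun j _ l hk => apply_eq_zero_of_colSpan_eq_span_single (hX j) hk l) hD huniq
    (hnil _ (Submodule.sum_mem S fun j _ => hXS j))
end

section
/- For any nil matrix space S ≤ M(n, F) with supporting directed graph H = ([n], F') (where (i,j) is an arc iff some A ∈ S has A(i,j) ≠ 0), there exists an acyclic spanning subgraph H' of H whose number of arcs is at least dim(S). -/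
open Matrix

/-- A directed graph has a cycle. -/
def HasCycle {n : ℕ} (E : Finset (Fin n × Fin n)) : Prop :=
  ∃ (k : ℕ) (v : ℕ → Fin n), 0 < k ∧ v k = v 0 ∧
    (∀ i < k, (v i, v (i + 1)) ∈ E) ∧ (∀ i < k, ∀ j < k, v i = v j → i = j)

namespace Stmt8Aux

variable {F : Type*} [Field F]

def rowMat {n : ℕ} (i : Fin n) (r : Fin n → F) : Matrix (Fin n) (Fin n) F :=
  Matrix.of fun a b => if a = i then r b else 0

lemma rowMat_apply {n : ℕ} (i : Fin n) (r : Fin n → F) (a b : Fin n) :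
    rowMat i r a b = if a = i then r b else 0 := rfl

lemma rowMat_mul_rowMat {n : ℕ} (i j : Fin n) (r q : Fin n → F) :
    rowMat i r * rowMat j q = r j • rowMat i q := by
  ext a b
  simp only [Matrix.mul_apply, rowMat_apply, Matrix.smul_apply, smul_eq_mul]
  by_cases h : a = i
  · simp [h, mul_ite, Finset.sum_ite_eq]
  · simp [h]

lemma periodic_eq_mod {α : Type*} {K : ℕ} {v : ℕ → α} (h : ∀ t, v (t + K) = v t) (a : ℕ) :
    v a = v (a % K) := by
  conv_lhs => rw [← Nat.mod_add_div a K]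
  generalize a / K = j
  induction j with
  | zero => simp
  | succ j ih => rw [Nat.mul_succ, ← Nat.add_assoc, h, ih]

lemma periodic_congr {α : Type*} {K : ℕ} {v : ℕ → α} (h : ∀ t, v (t + K) = v t)
    {a b : ℕ} (hab : a % K = b % K) : v a = v b := by
  rw [periodic_eq_mod h a, periodic_eq_mod h b, hab]

def IsWalk {n : ℕ} (D : Fin n → Fin n → Prop) (v : ℕ → Fin n) : Prop :=
  ∀ t, D (v t) (v (t + 1))

lemma weak_cyc {n : ℕ} {D : Fin n → Fin n → Prop} {v : ℕ → Fin n} (hw : IsWalk D v)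
    (a K : ℕ) (hK : 0 < K) (hret : v (a + K) = v a) :
    ∃ u : ℕ → Fin n, (∀ t, u (t + K) = u t) ∧ IsWalk D u := by
  refine ⟨fun t => v (a + t % K), fun t => by simp [Nat.add_mod_right], ?_⟩
  intro t
  show D (v (a + t % K)) (v (a + (t+1) % K))
  have key : v (a + (t + 1) % K) = v (a + t % K + 1) := by
    rcases Nat.lt_or_ge (t % K + 1) K with hlt | hge
    · have h1 : (t+1) % K = t % K + 1 := by
        rw [← Nat.mod_add_mod]; exact Nat.mod_eq_of_lt hlt
      rw [h1, ← Nat.add_assoc]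
    · have hk : t % K + 1 = K := Nat.le_antisymm hge (Nat.succ_le_of_lt (Nat.mod_lt t hK)) |>.symm
      have h1 : (t+1) % K = 0 := by rw [← Nat.mod_add_mod, hk, Nat.mod_self]
      rw [h1, Nat.add_zero, show a + t % K + 1 = a + K from by omega]
      exact hret.symm
  rw [key]
  exact hw (a + t % K)

lemma lemA {n : ℕ} (S : Submodule F (Matrix (Fin (n+1)) (Fin (n+1)) F))
    (hnil : ∀ B ∈ S, IsNilpotent B) :
    ∃ i, ∀ r : Fin (n+1) → F, rowMat i r ∈ S → r = 0 := by
  classical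
  by_contra hcon
  push_neg at hcon
  set D : Fin (n+1) → Fin (n+1) → Prop := fun i j => ∃ r, rowMat i r ∈ S ∧ r j ≠ 0 with hD
  have hout : ∀ i, ∃ j, D i j := by
    intro i
    obtain ⟨r, hrS, hr⟩ := hcon i
    obtain ⟨j, hj⟩ := Function.ne_iff.mp hr
    exact ⟨j, r, hrS, hj⟩
  choose f hf using hout
  set v : ℕ → Fin (n+1) := fun t => f^[t] 0 with hv
  have hwalk : IsWalk D v := by
    intro t
    show D (f^[t] 0) (f^[t+1] 0)
    rw [Function.iterate_succ_apply']
    exact hf _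
  obtain ⟨a, b, hne, heq⟩ := Fintype.exists_ne_map_eq_of_card_lt
    (fun t : Fin (n+2) => v t) (by simp)
  have hvne : (a : ℕ) ≠ (b : ℕ) := fun h => hne (Fin.val_injective h)
  have hex : ∃ (a K : ℕ), 0 < K ∧ v (a + K) = v a := by
    rcases Nat.lt_or_ge (a : ℕ) (b : ℕ) with h | h
    · exact ⟨a, b - a, by omega, by rw [show (a:ℕ) + ((b:ℕ) - a) = b from by omega]; exact heq.symm⟩
    · have h' : (b : ℕ) < a := by omega
      exact ⟨b, a - b, by omega, by rw [show (b:ℕ) + ((a:ℕ) - b) = a from by omega]; exact heq⟩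
  set P : ℕ → Prop := fun K => 0 < K ∧ ∃ u : ℕ → Fin (n+1), (∀ t, u (t + K) = u t) ∧ IsWalk D u
    with hPdef
  have hP : ∃ K, P K := by
    obtain ⟨a0, K0, hK0, hret⟩ := hex
    obtain ⟨u, hper, hwu⟩ := weak_cyc hwalk a0 K0 hK0 hret
    exact ⟨K0, hK0, u, hper, hwu⟩
  set K := Nat.find hP with hKdef
  obtain ⟨hKpos, u, hper, hwu⟩ : P K := Nat.find_spec hP
  have hmin : ∀ L, L < K → ¬ P L := fun L hL => Nat.find_min hP hL
  -- chordlessness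
  have hchord : ∀ a, a < K → ∀ b, b < K → b ≠ (a + 1) % K →
      ∀ q, rowMat (u a) q ∈ S → q (u b) = 0 := by
    intro a ha b hb hne' q hqS
    by_contra hq
    set w : ℕ → Fin (n+1) := fun t => if t = 0 then u a else u (b + (t - 1)) with hw
    have hww : IsWalk D w := by
      intro t
      cases t with
      | zero =>
          show D (u a) (u (b + 0))
          rw [Nat.add_zero]
          exact ⟨q, hqS, hq⟩
      | succ t =>
          show D (u (b + t)) (u (b + (t + 1)))
          rw [show b + (t+1) = (b + t) + 1 from by omega]
          exact hwu (b + t)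
    set m := (a + (K - b)) % K with hm
    have hbm : (b + m) % K = a % K := by
      have h1 : (b + (a + (K - b))) = a + K := by omega
      calc (b + m) % K = (b + (a + (K - b))) % K := by rw [hm, Nat.add_mod_mod]
        _ = (a + K) % K := by rw [h1]
        _ = a % K := Nat.add_mod_right a K
    have hmK : m < K := Nat.mod_lt _ hKpos
    have hLK : m + 1 < K := by
      rcases Nat.lt_or_ge (m + 1) K with h | h
      · exact h
      · exfalso
        have hmeq : m = K - 1 := by omega
        apply hne'
        have h2 : (b + m + 1) % K = (a + 1) % K := by
          rw [← Nat.mod_add_mod, hbm, Nat.mod_add_mod]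
        have h3 : b + m + 1 = b + K := by omega
        rw [h3, Nat.add_mod_right, Nat.mod_eq_of_lt hb] at h2
        exact h2
    have hretw : w (0 + (m + 1)) = w 0 := by
      show w (0 + (m+1)) = u a
      rw [Nat.zero_add, hw]
      simp only [Nat.add_one_ne_zero, if_neg, if_false]
      show u (b + (m + 1 - 1)) = u a
      rw [Nat.add_sub_cancel]
      exact periodic_congr hper hbm
    obtain ⟨u', hper', hwu'⟩ := weak_cyc hww 0 (m+1) (by omega) hretw
    exact hmin (m+1) hLK ⟨by omega, u', hper', hwu'⟩
  -- choose row vectors along the walk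
  choose r hrS hrne using fun s : ℕ => (hwu s : ∃ r, rowMat (u s) r ∈ S ∧ r (u (s+1)) ≠ 0)
  set B : Matrix (Fin (n+1)) (Fin (n+1)) F := ∑ s ∈ Finset.range K, rowMat (u s) (r s) with hB
  have hBS : B ∈ S := Submodule.sum_mem _ fun s _ => hrS s
  have humod : ∀ j : ℕ, u (j % K + 1) = u ((j+1) % K) :=
    fun j => periodic_congr hper (by simp [Nat.mod_add_mod])
  have C1 : ∀ j : ℕ, rowMat (u 0) (r (j % K)) * B =
      (r (j % K) (u (j % K + 1))) • rowMat (u 0) (r ((j+1) % K)) := by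
    intro j
    rw [hB, Finset.mul_sum]
    rw [Finset.sum_eq_single ((j+1) % K)]
    · rw [rowMat_mul_rowMat, ← humod j]
    · intro s hs hsne
      rw [rowMat_mul_rowMat]
      have hz := hchord (j % K) (Nat.mod_lt _ hKpos) s (Finset.mem_range.mp hs)
        (by rw [Nat.mod_add_mod]; exact hsne) (r (j % K)) (hrS _)
      rw [hz, zero_smul]
    · intro h
      exact absurd (Finset.mem_range.mpr (Nat.mod_lt _ hKpos)) h
  have C2 : ∀ j : ℕ, rowMat (u 0) (r 0) * B ^ j =
      (∏ l ∈ Finset.range j, r (l % K) (u (l % K + 1))) • rowMat (u 0) (r (j % K)) := by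
    intro j
    induction j with
    | zero => simp
    | succ j ih =>
        rw [pow_succ, ← mul_assoc, ih, smul_mul_assoc, C1 j, smul_smul,
          Finset.prod_range_succ]
  obtain ⟨N, hN⟩ := hnil B hBS
  have h0 := C2 N
  rw [hN, mul_zero] at h0
  have hprod : (∏ l ∈ Finset.range N, r (l % K) (u (l % K + 1))) ≠ 0 :=
    Finset.prod_ne_zero_iff.mpr fun l _ => hrne (l % K)
  have hzero : rowMat (u 0) (r (N % K)) = 0 :=
    ((smul_eq_zero.mp h0.symm).resolve_left hprod)
  have hz2 : rowMat (u 0) (r (N % K)) (u 0) (u (N % K + 1)) = 0 := by rw [hzero]; rfl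
  rw [rowMat_apply, if_pos rfl] at hz2
  exact hrne (N % K) hz2



lemma diag_zero {n : ℕ} {M : Matrix (Fin n) (Fin n) F} {i : Fin n}
    (hM : IsNilpotent M) (hoff : ∀ j, j ≠ i → M j i = 0) : M i i = 0 := by
  have hp : ∀ k, (M ^ k) i i = (M i i) ^ k := by
    intro k
    induction k with
    | zero => simp
    | succ k ih =>
        rw [pow_succ, pow_succ, Matrix.mul_apply, Finset.sum_eq_single i]
        · rw [ih]
        · intro c _ hc; rw [hoff c hc, mul_zero]
        · simp
  obtain ⟨N, hN⟩ := hM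
  rcases Nat.eq_zero_or_pos N with rfl | hNpos
  · have h1 : (1 : Matrix (Fin n) (Fin n) F) = 0 := by rw [← pow_zero M, hN]
    have hM0 : M = 0 := by rw [← mul_one M, h1, mul_zero]
    rw [hM0]; rfl
  · have h2 := hp N
    rw [hN] at h2
    have h3 : (M i i) ^ N = 0 := by rw [← h2]; rfl
    exact pow_eq_zero_iff (by omega) |>.mp h3

lemma submul {m : ℕ} (i : Fin (m+1)) (A M : Matrix (Fin (m+1)) (Fin (m+1)) F)
    (hA : ∀ j, A j i = 0) :
    (A.submatrix i.succAbove i.succAbove) * (M.submatrix i.succAbove i.succAbove)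
      = (A * M).submatrix i.succAbove i.succAbove := by
  ext a b
  rw [Matrix.submatrix_apply, Matrix.mul_apply, Matrix.mul_apply,
    Fin.sum_univ_succAbove (fun c => A (i.succAbove a) c * M c (i.succAbove b)) i]
  simp [hA]

lemma powcol {m : ℕ} (i : Fin (m+1)) (M : Matrix (Fin (m+1)) (Fin (m+1)) F)
    (hc : ∀ j, M j i = 0) (k : ℕ) : ∀ j, (M ^ (k+1)) j i = 0 := by
  intro j
  rw [pow_succ, Matrix.mul_apply]
  exact Finset.sum_eq_zero fun c _ => by rw [hc c, mul_zero]

lemma subpow {m : ℕ} (i : Fin (m+1)) (M : Matrix (Fin (m+1)) (Fin (m+1)) F)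
    (hc : ∀ j, M j i = 0) (k : ℕ) :
    (M.submatrix i.succAbove i.succAbove) ^ (k+1)
      = (M ^ (k+1)).submatrix i.succAbove i.succAbove := by
  induction k with
  | zero => simp
  | succ k ih =>
      rw [pow_succ, ih, submul i _ _ (powcol i M hc k), ← pow_succ]

lemma rank_le_supported {V : Type*} [AddCommGroup V] [Module F V] [FiniteDimensional F V]
    {ι : Type*} [Fintype ι] (f : V →ₗ[F] (ι → F)) (J : Finset ι)
    (hsupp : ∀ v j, j ∉ J → f v j = 0) :
    Module.finrank F V ≤ J.card + Module.finrank F (LinearMap.ker f) := by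
  classical
  set g := (LinearMap.funLeft F F (Subtype.val : {x // x ∈ J} → ι)).comp f with hg
  have hker : LinearMap.ker g = LinearMap.ker f := by
    ext v
    simp only [LinearMap.mem_ker]
    constructor
    · intro hv
      funext j
      by_cases hj : j ∈ J
      · exact congrFun hv ⟨j, hj⟩
      · exact hsupp v j hj
    · intro hv
      funext j
      show f v j.1 = 0
      rw [hv]
      rfl
  have h1 := LinearMap.finrank_range_add_finrank_ker g
  have h2 : Module.finrank F (LinearMap.range g) ≤ J.card := by
    refine le_trans (Submodule.finrank_le _) ?_
    rw [Module.finrank_pi]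
    exact le_of_eq (Fintype.card_coe J)
  rw [hker] at h1
  omega

def compress {m : ℕ} (i : Fin (m+1)) :
    Matrix (Fin (m+1)) (Fin (m+1)) F →ₗ[F] Matrix (Fin m) (Fin m) F where
  toFun M := M.submatrix i.succAbove i.succAbove
  map_add' _ _ := rfl
  map_smul' _ _ := rfl

def colZ {n : ℕ} (i : Fin n) : Submodule F (Matrix (Fin n) (Fin n) F) where
  carrier := {B | ∀ j, B j i = 0}
  add_mem' := by intro a b ha hb j; simp [Matrix.add_apply, ha j, hb j]
  zero_mem' := by intro j; rfl
  smul_mem' := by intro c a ha j; simp [Matrix.smul_apply, ha j]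

set_option maxHeartbeats 1000000 in
set_option synthInstance.maxHeartbeats 800000 in
lemma aux (F : Type*) [Field F] : ∀ (n : ℕ) (S : Submodule F (Matrix (Fin n) (Fin n) F)),
    (∀ B ∈ S, IsNilpotent B) →
    ∃ E' : Finset (Fin n × Fin n),
      (∀ e ∈ E', ∃ A ∈ S, A e.1 e.2 ≠ 0) ∧ ¬ HasCycle E' ∧
        Module.finrank F S ≤ E'.card := by
  intro n
  induction n with
  | zero =>
      intro S hnil
      refine ⟨∅, by simp, ?_, ?_⟩
      · rintro ⟨k, v, hk, -, harc, -⟩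
        exact absurd (harc 0 hk) (by simp)
      · have hS : S = ⊥ := by
          rw [eq_bot_iff]
          intro x hx
          have hx0 : x = 0 := by ext a b; exact a.elim0
          simp [hx0]
        rw [hS, finrank_bot]
        simp
  | succ m ih =>
      intro S hnil
      classical
      obtain ⟨i, hi⟩ := lemA S hnil
      set sa := i.succAbove with hsa
      set J : Finset (Fin (m+1)) := Finset.univ.filter
        (fun j => j ≠ i ∧ ∃ A ∈ S, (A : Matrix (Fin (m+1)) (Fin (m+1)) F) j i ≠ 0) with hJ
      set T : Submodule F (Matrix (Fin (m+1)) (Fin (m+1)) F) := S ⊓ colZ i with hT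
      -- the "in-arcs of i" functional
      set g : S →ₗ[F] (Fin (m+1) → F) :=
        { toFun := fun B j => if j ∈ J then (B : Matrix (Fin (m+1)) (Fin (m+1)) F) j i else 0,
          map_add' := by
            intro x y; funext j; by_cases hj : j ∈ J <;> simp [hj],
          map_smul' := by
            intro c x; funext j; by_cases hj : j ∈ J <;> simp [hj] } with hg
      have hgsupp : ∀ (v : S) j, j ∉ J → g v j = 0 := by
        intro v j hj
        show (if j ∈ J then _ else 0) = 0
        rw [if_neg hj]
      have hkerg : ∀ B : S, B ∈ LinearMap.ker g →
          ∀ j, (B : Matrix (Fin (m+1)) (Fin (m+1)) F) j i = 0 := by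
        intro B hB
        have hoff : ∀ j, j ≠ i → (B : Matrix (Fin (m+1)) (Fin (m+1)) F) j i = 0 := by
          intro j hj
          by_cases hs : ∃ A ∈ S, (A : Matrix (Fin (m+1)) (Fin (m+1)) F) j i ≠ 0
          · have hjJ : j ∈ J := by
              rw [hJ, Finset.mem_filter]
              exact ⟨Finset.mem_univ _, hj, hs⟩
            have h0 := congrFun (LinearMap.mem_ker.mp hB) j
            rwa [hg, LinearMap.coe_mk, AddHom.coe_mk, if_pos hjJ] at h0
          · push_neg at hs
            exact hs _ B.2
        intro j
        rcases eq_or_ne j i with rfl | hj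
        · exact diag_zero (hnil _ B.2) hoff
        · exact hoff j hj
      have hker_eq : LinearMap.ker g = Submodule.comap S.subtype T := by
        ext B
        simp only [Submodule.mem_comap, Submodule.coe_subtype, hT, Submodule.mem_inf]
        constructor
        · intro hB
          exact ⟨B.2, hkerg B hB⟩
        · intro hB
          rw [LinearMap.mem_ker]
          funext j
          show (if j ∈ J then _ else 0) = 0
          by_cases hj : j ∈ J
          · rw [if_pos hj]; exact hB.2 j
          · rw [if_neg hj]
      have hdim1 : Module.finrank F S ≤ J.card + Module.finrank F T := by
        have h1 := rank_le_supported g J hgsupp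
        have h2 : Module.finrank F (LinearMap.ker g) = Module.finrank F T := by
          rw [hker_eq]
          exact (Submodule.comapSubtypeEquivOfLe (inf_le_left : T ≤ S)).finrank_eq
        omega
      -- compression
      set f2 : T →ₗ[F] Matrix (Fin m) (Fin m) F := (compress i).comp T.subtype with hf2
      set S' := LinearMap.range f2 with hS'
      have hmemT : ∀ B : T, (B : Matrix (Fin (m+1)) (Fin (m+1)) F) ∈ S ∧
          ∀ j, (B : Matrix (Fin (m+1)) (Fin (m+1)) F) j i = 0 := by
        intro B
        have h2 := Submodule.mem_inf.mp B.2
        exact ⟨h2.1, h2.2⟩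
      have hnil' : ∀ X ∈ S', IsNilpotent X := by
        rintro X hX
        obtain ⟨B, rfl⟩ := LinearMap.mem_range.mp hX
        obtain ⟨N, hN⟩ := hnil _ (hmemT B).1
        refine ⟨N + 1, ?_⟩
        show ((B : Matrix (Fin (m+1)) (Fin (m+1)) F).submatrix sa sa) ^ (N+1) = 0
        rw [hsa, subpow i _ (hmemT B).2, pow_succ, hN, Matrix.zero_mul]
        simp
      have hker2 : LinearMap.ker f2 = ⊥ := by
        rw [eq_bot_iff]
        intro x hx
        have hsub : ∀ a b, (x : Matrix (Fin (m+1)) (Fin (m+1)) F) (sa a) (sa b) = 0 := by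
          intro a b
          have h0 := LinearMap.mem_ker.mp hx
          exact congrFun (congrFun h0 a) b
        have hcol := (hmemT x).2
        have hrow : (x : Matrix (Fin (m+1)) (Fin (m+1)) F)
            = rowMat i (fun b => (x : Matrix (Fin (m+1)) (Fin (m+1)) F) i b) := by
          ext a b
          rw [rowMat_apply]
          by_cases ha : a = i
          · rw [if_pos ha, ha]
          · rw [if_neg ha]
            by_cases hb : b = i
            · rw [hb]; exact hcol a
            · obtain ⟨a', ha'⟩ := Fin.exists_succAbove_eq ha
              obtain ⟨b', hb'⟩ := Fin.exists_succAbove_eq hb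
              rw [← ha', ← hb']
              exact hsub a' b'
        have hr0 := hi _ (by rw [← hrow]; exact (hmemT x).1)
        have hx0 : (x : Matrix (Fin (m+1)) (Fin (m+1)) F) = 0 := by
          rw [hrow, hr0]
          ext a b
          rw [rowMat_apply]
          simp
        simp only [Submodule.mem_bot]
        exact Subtype.ext hx0
      have hdim2 : Module.finrank F T = Module.finrank F S' := by
        have h1 := LinearMap.finrank_range_add_finrank_ker f2
        rw [hker2, finrank_bot, add_zero] at h1
        exact h1.symm
      obtain ⟨E'', hsupp'', hcyc'', hcard''⟩ := ih S' hnil'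
      have hdim : Module.finrank F S ≤ J.card + E''.card := by omega
      set E'f : Finset (Fin (m+1) × Fin (m+1)) := E''.image fun e => (sa e.1, sa e.2) with hE'f
      set E's : Finset (Fin (m+1) × Fin (m+1)) := J.image fun j => (j, i) with hE's
      set E' : Finset (Fin (m+1) × Fin (m+1)) := E'f ∪ E's with hE'
      have hsainj : Function.Injective sa := Fin.succAbove_right_injective
      refine ⟨E', ?_, ?_, ?_⟩
      · intro e he
        rw [hE', Finset.mem_union] at he
        rcases he with he | he
        · obtain ⟨⟨a, b⟩, hab, rfl⟩ := Finset.mem_image.mp he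
          obtain ⟨X, hX, hXab⟩ := hsupp'' _ hab
          obtain ⟨B, rfl⟩ := LinearMap.mem_range.mp hX
          exact ⟨(B : Matrix (Fin (m+1)) (Fin (m+1)) F), (hmemT B).1, hXab⟩
        · obtain ⟨j, hjJ, rfl⟩ := Finset.mem_image.mp he
          exact (Finset.mem_filter.mp hjJ).2.2
      · rintro ⟨k, v, hk, hclose, harc, hinj⟩
        have hfst : ∀ t, t < k → v t ≠ i := by
          intro t ht
          have h := harc t ht
          rw [hE', Finset.mem_union] at h
          rcases h with h | h
          · obtain ⟨⟨a, b⟩, -, heq⟩ := Finset.mem_image.mp h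
            have h1 : sa a = v t := congrArg Prod.fst heq
            rw [← h1]; exact Fin.succAbove_ne i a
          · obtain ⟨j, hjJ, heq⟩ := Finset.mem_image.mp h
            have h1 : j = v t := congrArg Prod.fst heq
            rw [← h1]
            exact (Finset.mem_filter.mp hjJ).2.1
        have hall : ∀ t, t ≤ k → v t ≠ i := by
          intro t ht
          rcases Nat.lt_or_ge t k with h | h
          · exact hfst t h
          · have hteq : t = k := by omega
            rw [hteq, hclose]; exact hfst 0 hk
        have harc' : ∀ t, t < k → ∃ p ∈ E'', (sa p.1, sa p.2) = (v t, v (t+1)) := by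
          intro t ht
          have h := harc t ht
          rw [hE', Finset.mem_union] at h
          rcases h with h | h
          · obtain ⟨p, hp, heq⟩ := Finset.mem_image.mp h
            exact ⟨p, hp, heq⟩
          · obtain ⟨j, hjJ, heq⟩ := Finset.mem_image.mp h
            have h2 : i = v (t+1) := congrArg Prod.snd heq
            exact absurd h2.symm (hall (t+1) ht)
        have hpre : ∀ t, t ≤ k → ∃ a : Fin m, sa a = v t := by
          intro t ht
          exact Fin.exists_succAbove_eq (hall t ht)
        have hnem : Nonempty (Fin m) := ⟨(hpre 0 (by omega)).choose⟩
        set w : ℕ → Fin m := fun t =>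
          if h : ∃ a : Fin m, sa a = v t then h.choose else Classical.arbitrary _ with hwdef
        have hwv : ∀ t, t ≤ k → sa (w t) = v t := by
          intro t ht
          rw [hwdef]
          simp only [dif_pos (hpre t ht)]
          exact (hpre t ht).choose_spec
        refine hcyc'' ⟨k, w, hk, ?_, ?_, ?_⟩
        · exact hsainj (by rw [hwv k le_rfl, hwv 0 (by omega), hclose])
        · intro t ht
          obtain ⟨p, hp, heq⟩ := harc' t ht
          have h1 : sa p.1 = v t := congrArg Prod.fst heq
          have h2 : sa p.2 = v (t+1) := congrArg Prod.snd heq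
          have e1 : w t = p.1 := hsainj (by rw [hwv t (le_of_lt ht), ← h1])
          have e2 : w (t+1) = p.2 := hsainj (by rw [hwv (t+1) ht, ← h2])
          rw [e1, e2]
          exact hp
        · intro t ht s hs heq
          exact hinj t ht s hs (by rw [← hwv t (le_of_lt ht), ← hwv s (le_of_lt hs), heq])
      · have hdisj : Disjoint E'f E's := by
          rw [Finset.disjoint_left]
          rintro ⟨x, y⟩ hx hy
          obtain ⟨p, -, heq⟩ := Finset.mem_image.mp hx
          obtain ⟨j, -, heq'⟩ := Finset.mem_image.mp hy
          have h1 : sa p.2 = y := congrArg Prod.snd heq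
          have h2 : i = y := congrArg Prod.snd heq'
          exact Fin.succAbove_ne i p.2 (h1.trans h2.symm)
        have hinjf : Function.Injective (fun e : Fin m × Fin m => (sa e.1, sa e.2)) := by
          intro p q h
          exact Prod.ext (hsainj (congrArg Prod.fst h)) (hsainj (congrArg Prod.snd h))
        have hinjs : Function.Injective (fun j : Fin (m+1) => (j, i)) := by
          intro p q h
          exact congrArg Prod.fst h
        rw [hE', Finset.card_union_of_disjoint hdisj, hE'f, hE's,
          Finset.card_image_of_injective _ hinjf, Finset.card_image_of_injective _ hinjs]
        omega

end Stmt8Aux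

/-- For any nil matrix space `S ≤ M(n, F)`, its supporting directed graph (with an arc
`(i,j)` whenever some `A ∈ S` has `A i j ≠ 0`) contains an acyclic spanning subgraph
with at least `dim S` arcs. -/
theorem stmt_8 (F : Type*) [Field F] (n : ℕ)
    (S : Submodule F (Matrix (Fin n) (Fin n) F))
    (hnil : ∀ B ∈ S, IsNilpotent B) :
    ∃ E' : Finset (Fin n × Fin n),
      (∀ e ∈ E', ∃ A ∈ S, A e.1 e.2 ≠ 0) ∧ ¬ HasCycle E' ∧
        Module.finrank F S ≤ E'.card :=
  Stmt8Aux.aux F n S hnil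
end

section
/- A matrix space S ≤ M(n, F) spanned by rank-1 matrices is nilpotent (some k with every product of k elements of S equal to 0) if and only if it is nil (every single element is nilpotent). -/
/-!
Write the spanning rank-one matrices as `u i vᵀ i` and draw an edge `i → i'` when
`v i ⬝ᵥ u i' ≠ 0`. A product of generators along a sequence `g` is the product of the edge
weights times `u (g 0) vᵀ (g last)`, so if the graph has no cycle every product of more
generators than there are vertices vanishes, and by multilinearity so does every such product
from the span. A nil span has no cycle: a shortest cycle has no chords, so the sum `M` of the
generators on it sends each `u (j t)` to a nonzero multiple of `u (j (t - 1))`, and no power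
of `M` vanishes.
-/

open Matrix

/-- A closed walk with the `k + 1` vertices `j 0, …, j k`; addition in `Fin (k + 1)` wraps
around, so the last step is `j k → j 0`. -/
def IsClosedWalk {α : Type*} (R : α → α → Prop) {k : ℕ} (j : Fin (k + 1) → α) : Prop :=
  ∀ i, R (j i) (j (i + 1))

section ClosedWalk

variable {α : Type*} {R : α → α → Prop}

namespace IsClosedWalk

variable {k : ℕ} {j : Fin (k + 1) → α}

lemma rotate (hj : IsClosedWalk R j) (r : Fin (k + 1)) : IsClosedWalk R (fun i ↦ j (i + r)) :=
  fun i ↦ by simpa only [add_right_comm] using hj (i + r)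

lemma shortcut (hj : IsClosedWalk R j) {s : Fin (k + 1)} (hs : R (j s) (j 0)) :
    IsClosedWalk R (fun i : Fin (s + 1) ↦ j (Fin.castLE s.isLt i)) := by
  intro i
  rcases eq_or_ne i (Fin.last s) with rfl | hi
  · rw [Fin.last_add_one]
    convert hs <;> ext <;> simp
  · convert hj (Fin.castLE s.isLt i) using 3
    have hi' : (i : ℕ) < s := Fin.val_lt_last hi
    ext
    rw [Fin.val_castLE, Fin.val_add_one_of_lt (Fin.lt_last_iff_ne_last.2 hi),
      Fin.val_add_one_of_lt' (by rw [Fin.val_castLE]; omega), Fin.val_castLE]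

lemma eq_add_one_of_rel (hj : IsClosedWalk R j)
    (hmin : ∀ k' < k, ∀ j' : Fin (k' + 1) → α, ¬ IsClosedWalk R j') {s r : Fin (k + 1)}
    (hsr : R (j s) (j r)) : r = s + 1 := by
  by_contra hne
  -- the chord and the arc from `r` to `s` form a closed walk of length `(s - r) + 1 < k + 1`
  have hlast : s - r ≠ Fin.last k := fun h ↦ hne <| by
    rw [← sub_add_cancel s r, h, add_right_comm, Fin.last_add_one, zero_add]
  refine hmin (s - r : Fin (k + 1)) (Fin.val_lt_last hlast) _ ((hj.rotate r).shortcut ?_)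
  simpa using hsr

end IsClosedWalk

lemma exists_isClosedWalk_chordless (h : ∃ k, ∃ j : Fin (k + 1) → α, IsClosedWalk R j) :
    ∃ k, ∃ j : Fin (k + 1) → α, IsClosedWalk R j ∧ ∀ s r, R (j s) (j r) → r = s + 1 := by
  classical
  obtain ⟨j, hj⟩ := Nat.find_spec h
  exact ⟨_, j, hj, fun s r ↦
    hj.eq_add_one_of_rel fun k' hk' j' hj' ↦ Nat.find_min h hk' ⟨j', hj'⟩⟩

lemma exists_isClosedWalk_of_walk {r : ℕ} {g : Fin (r + 1) → α}
    (hg : ∀ i : Fin r, R (g i.castSucc) (g i.succ)) {x y : Fin (r + 1)} (hxy : x < y)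
    (hgxy : g x = g y) : ∃ k, ∃ j : Fin (k + 1) → α, IsClosedWalk R j := by
  have hxy' : (x : ℕ) < y := hxy
  refine ⟨y - x - 1, fun i ↦ g ⟨x + i, by omega⟩, fun i ↦ ?_⟩
  rcases eq_or_ne i (Fin.last _) with rfl | hi
  · rw [Fin.last_add_one]
    convert hg ⟨y - 1, by omega⟩ using 1
    · exact congrArg g (Fin.ext (by simp; omega))
    · exact (congrArg g (Fin.ext (by simp))).trans
        (hgxy.trans (congrArg g (Fin.ext (by simp; omega))))
  · convert hg ⟨x + i, by have := Fin.val_lt_last hi; omega⟩ using 2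
    · rfl
    · ext
      show (x : ℕ) + ((i + 1 : Fin _) : ℕ) = x + i + 1
      rw [Fin.val_add_one_of_lt (Fin.lt_last_iff_ne_last.2 hi), add_assoc]

lemma injective_of_forall_not_isClosedWalk {r : ℕ}
    (hR : ∀ k (j : Fin (k + 1) → α), ¬ IsClosedWalk R j) {g : Fin (r + 1) → α}
    (hg : ∀ i : Fin r, R (g i.castSucc) (g i.succ)) : Function.Injective g := by
  intro x y hgxy
  by_contra hne
  rcases lt_or_gt_of_ne hne with hxy | hxy
  · obtain ⟨k, j, hj⟩ := exists_isClosedWalk_of_walk hg hxy hgxy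
    exact hR k j hj
  · obtain ⟨k, j, hj⟩ := exists_isClosedWalk_of_walk hg hxy hgxy.symm
    exact hR k j hj

end ClosedWalk

namespace Submodule

variable {R A : Type*} [CommSemiring R] [Semiring A] [Algebra R A]

lemma list_prod_ofFn_mem_pow {M : Submodule R A} {k : ℕ} {f : Fin k → A} (hf : ∀ i, f i ∈ M) :
    (List.ofFn f).prod ∈ M ^ k := by
  rw [pow_eq_span_pow_set]
  exact subset_span (Set.mem_pow.2 ⟨fun i ↦ ⟨f i, hf i⟩, rfl⟩)

lemma span_pow_eq_bot {s : Set A} {k : ℕ}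
    (hs : ∀ f : Fin k → A, (∀ i, f i ∈ s) → (List.ofFn f).prod = 0) : span R s ^ k = ⊥ := by
  rw [span_pow, span_eq_bot]
  intro _ hx
  obtain ⟨f, rfl⟩ := Set.mem_pow.1 hx
  exact hs _ fun i ↦ (f i).2

end Submodule

namespace Matrix

variable {K : Type*} [Field K] {n : Type*} [Fintype n] [DecidableEq n]

lemma list_prod_ofFn_vecMulVec {r : ℕ} (x y : Fin (r + 1) → n → K) :
    (List.ofFn fun i ↦ vecMulVec (x i) (y i)).prod =
      (∏ i : Fin r, y i.castSucc ⬝ᵥ x i.succ) • vecMulVec (x 0) (y (Fin.last r)) := by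
  induction r with
  | zero => simp
  | succ r ih =>
    rw [List.ofFn_succ, List.prod_cons, ih (fun i ↦ x i.succ) (fun i ↦ y i.succ),
      Fin.prod_univ_succ, mul_smul_comm, vecMulVec_mul_vecMulVec, vecMulVec_smul, smul_smul]
    simp only [Fin.succ_castSucc, Fin.succ_last, Fin.castSucc_zero, mul_comm]

lemma not_isNilpotent_of_mulVec_eq_smul {ι : Type*} [Nonempty ι] {M : Matrix n n K}
    {x : ι → n → K} (hx : ∀ t, x t ≠ 0) (hM : ∀ t, ∃ s, ∃ c : K, c ≠ 0 ∧ M *ᵥ x t = c • x s) :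
    ¬ IsNilpotent M := by
  have hpow : ∀ N t, ∃ s, ∃ c : K, c ≠ 0 ∧ (M ^ N) *ᵥ x t = c • x s := by
    intro N
    induction N with
    | zero => exact fun t ↦ ⟨t, 1, one_ne_zero, by simp⟩
    | succ N ih =>
      intro t
      obtain ⟨s, c, hc, hs⟩ := ih t
      obtain ⟨s', c', hc', hs'⟩ := hM s
      refine ⟨s', c * c', mul_ne_zero hc hc', ?_⟩
      rw [pow_succ', ← mulVec_mulVec, hs, mulVec_smul, hs', smul_smul]
  rintro ⟨N, hN⟩
  obtain ⟨s, c, hc, hs⟩ := hpow N (Classical.arbitrary ι)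
  rw [hN, zero_mulVec] at hs
  exact hx s ((smul_eq_zero.1 hs.symm).resolve_left hc)

lemma exists_vecMulVec_of_rank_eq_one {m : Type*} {A : Matrix m n K} (h : A.rank = 1) :
    ∃ (u : m → K) (v : n → K), u ≠ 0 ∧ A = vecMulVec u v := by
  obtain ⟨⟨u, _⟩, hu, hspan⟩ := finrank_eq_one_iff'.1 h
  choose v hv using fun j ↦ hspan ⟨A *ᵥ Pi.single j 1, Pi.single j 1, rfl⟩
  refine ⟨u, v, fun h0 ↦ hu (Subtype.ext h0), ?_⟩
  ext i j
  have := congrFun (congrArg Subtype.val (hv j)) i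
  simp only [SetLike.mk_smul_mk, Pi.smul_apply, smul_eq_mul, mulVec_single, MulOpposite.op_one,
    col_apply, one_smul] at this
  simp [vecMulVec_apply, ← this, mul_comm]

variable {ι : Type*} (u v : ι → n → K)

lemma not_isNilpotent_sum_vecMulVec_of_chordless {k : ℕ} (hu : ∀ i, u i ≠ 0)
    {j : Fin (k + 1) → ι} (hj : IsClosedWalk (fun a b ↦ v a ⬝ᵥ u b ≠ 0) j)
    (hchord : ∀ s r, v (j s) ⬝ᵥ u (j r) ≠ 0 → r = s + 1) :
    ¬ IsNilpotent (∑ t, vecMulVec (u (j t)) (v (j t))) := by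
  refine not_isNilpotent_of_mulVec_eq_smul (x := fun t ↦ u (j t)) (fun t ↦ hu _) fun t ↦
    ⟨t - 1, v (j (t - 1)) ⬝ᵥ u (j t), by simpa using hj (t - 1), ?_⟩
  rw [sum_mulVec, Finset.sum_eq_single (t - 1)]
  · rw [vecMulVec_mulVec, op_smul_eq_smul]
  · intro s _ hs
    have hdot : v (j s) ⬝ᵥ u (j t) = 0 := by
      by_contra h
      exact hs (eq_sub_of_add_eq (hchord s t h).symm)
    rw [vecMulVec_mulVec, hdot, MulOpposite.op_zero, zero_smul]
  · exact fun h ↦ absurd (Finset.mem_univ _) h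

lemma forall_not_isClosedWalk_of_isNilpotent (hu : ∀ i, u i ≠ 0)
    (hnil : ∀ B ∈ Submodule.span K (Set.range fun i ↦ vecMulVec (u i) (v i)), IsNilpotent B)
    (k : ℕ) (j : Fin (k + 1) → ι) : ¬ IsClosedWalk (fun a b ↦ v a ⬝ᵥ u b ≠ 0) j := by
  intro hj
  obtain ⟨k', j', hj', hchord⟩ := exists_isClosedWalk_chordless ⟨k, j, hj⟩
  exact not_isNilpotent_sum_vecMulVec_of_chordless u v hu hj' hchord <| hnil _ <|
    Submodule.sum_mem _ fun t _ ↦ Submodule.subset_span ⟨j' t, rfl⟩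

lemma list_prod_ofFn_vecMulVec_eq_zero [Fintype ι]
    (hR : ∀ k (j : Fin (k + 1) → ι), ¬ IsClosedWalk (fun a b ↦ v a ⬝ᵥ u b ≠ 0) j)
    (g : Fin (Fintype.card ι + 1) → ι) :
    (List.ofFn fun i ↦ vecMulVec (u (g i)) (v (g i))).prod = 0 := by
  rw [list_prod_ofFn_vecMulVec, Finset.prod_eq_zero_iff.2, zero_smul]
  by_contra! hg
  have := Fintype.card_le_of_injective g
    (injective_of_forall_not_isClosedWalk hR fun i ↦ hg i (Finset.mem_univ _))
  simp at this

lemma span_vecMulVec_pow_eq_bot [Fintype ι]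
    (hR : ∀ k (j : Fin (k + 1) → ι), ¬ IsClosedWalk (fun a b ↦ v a ⬝ᵥ u b ≠ 0) j) :
    Submodule.span K (Set.range fun i ↦ vecMulVec (u i) (v i)) ^ (Fintype.card ι + 1) = ⊥ := by
  refine Submodule.span_pow_eq_bot fun f hf ↦ ?_
  choose g hg using hf
  rw [← funext hg]
  exact list_prod_ofFn_vecMulVec_eq_zero u v hR g

end Matrix

/-- Mathes–Omladič–Radjavi: a matrix space spanned by rank-1 matrices is nilpotent
(some `k` with every product of `k` elements equal to `0`) iff it is nil (every element
is nilpotent). -/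
theorem stmt_9 (F : Type*) [Field F] (n : ℕ)
    (S : Submodule F (Matrix (Fin n) (Fin n) F))
    (T : Set (Matrix (Fin n) (Fin n) F))
    (hT : ∀ A ∈ T, A.rank = 1)
    (hspan : Submodule.span F T = S) :
    (∃ k : ℕ, ∀ f : Fin k → Matrix (Fin n) (Fin n) F,
        (∀ i, f i ∈ S) → (List.ofFn f).prod = 0) ↔
      (∀ B ∈ S, IsNilpotent B) := by
  refine ⟨fun ⟨k, hk⟩ B hB ↦ ⟨k, ?_⟩, fun hnil ↦ ?_⟩
  · simpa [List.ofFn_const] using hk (fun _ ↦ B) fun _ ↦ hB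
  obtain ⟨b, hbT, hbspan, hbli⟩ := exists_linearIndependent F T
  have : Fintype b := hbli.setFinite.fintype
  choose u v hu hA using fun i : b ↦ exists_vecMulVec_of_rank_eq_one (hT _ (hbT i.2))
  have hS : Submodule.span F (Set.range fun i ↦ vecMulVec (u i) (v i)) = S := by
    rw [← hspan, ← hbspan, ← funext hA, Subtype.range_coe]
  rw [← hS] at hnil ⊢
  refine ⟨Fintype.card b + 1, fun f hf ↦ ?_⟩
  have hpow := span_vecMulVec_pow_eq_bot u v (forall_not_isClosedWalk_of_isNilpotent u v hu hnil)
  rw [← Submodule.mem_bot F, ← hpow]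
  exact Submodule.list_prod_ofFn_mem_pow hf
end

section
/- A completely positive map Φ: M(n, ℂ) → M(n, ℂ) with Choi–Kraus operators E_1, …, E_m is irreducible (the only orthogonal projections P with Φ(P M(n,ℂ) P) ⊆ P M(n,ℂ) P are 0 and I_n) if and only if the matrix space S_Φ = ⟨E_1, …, E_m⟩ is irreducible, i.e., has no invariant subspace of ℂ^n other than 0 and ℂ^n. -/
/-!
An orthogonal projection `P` maps `Φ(P X P)` back into the corner `P M(n,ℂ) P` exactly when its
range is invariant under every Kraus operator, i.e. `P E_i P = E_i P`. One direction is a direct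
computation. Conversely, taking `X = 1` gives `(1 - P) Φ(P) (1 - P) = 0`, and this is the sum of
the positive semidefinite matrices `A_i A_iᴴ` with `A_i = (1 - P) E_i P`, so every `A_i` vanishes.
As every subspace is the range of an orthogonal projection, and `P` is `0` or `1` iff its range is
`⊥` or `⊤`, the two notions of irreducibility agree.
-/

open Matrix

section Invariance

variable {R n : Type*} [CommRing R] [Fintype n] [DecidableEq n]

lemma Matrix.forall_mem_span_mem_invtSubmodule_iff {s : Set (Matrix n n R)}
    {U : Submodule R (n → R)} :
    (∀ B ∈ Submodule.span R s, U ∈ Module.End.invtSubmodule B.mulVecLin) ↔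
      ∀ B ∈ s, U ∈ Module.End.invtSubmodule B.mulVecLin :=
  Submodule.span_le (p := (Submodule.compatibleMaps U U).comap toLin'.toLinearMap)

lemma Matrix.range_mulVecLin_mem_invtSubmodule_iff {P E : Matrix n n R} (hP : IsIdempotentElem P) :
    LinearMap.range P.mulVecLin ∈ Module.End.invtSubmodule E.mulVecLin ↔ P * E * P = E * P := by
  rw [← toLinAlgEquiv'.injective.eq_iff, map_mul, map_mul, map_mul]
  exact LinearMap.IsIdempotentElem.range_mem_invtSubmodule_iff (hP.map toLinAlgEquiv')

lemma Matrix.range_mulVecLin_eq_bot_iff {A : Matrix n n R} :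
    LinearMap.range A.mulVecLin = ⊥ ↔ A = 0 := by
  rw [LinearMap.range_eq_bot, ← toLin'_apply', ← map_zero toLin', toLin'.injective.eq_iff]

lemma IsIdempotentElem.range_mulVecLin_eq_top_iff {P : Matrix n n R} (hP : IsIdempotentElem P) :
    LinearMap.range P.mulVecLin = ⊤ ↔ P = 1 := by
  refine ⟨fun h => toLin'.injective (LinearMap.ext fun x => ?_), fun h => by simp [h]⟩
  obtain ⟨y, rfl⟩ := LinearMap.range_eq_top.mp h x
  simp [hP.eq]

end Invariance

section Kraus

variable {α 𝕜 m n ι : Type*} [Fintype n] [Fintype ι]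

def Matrix.krausMap [Ring α] [StarRing α] (E : ι → Matrix n n α) (X : Matrix n n α) :
    Matrix n n α :=
  ∑ i, E i * X * (E i)ᴴ

lemma Matrix.mul_krausMap_mul_eq_of_mul_mul_eq [Ring α] [StarRing α] {E : ι → Matrix n n α}
    {P : Matrix n n α} (hP : Pᴴ = P) (hE : ∀ i, P * E i * P = E i * P) (X : Matrix n n α) :
    P * krausMap E (P * X * P) * P = krausMap E (P * X * P) := by
  have hE' (i : ι) : P * (E i)ᴴ * P = P * (E i)ᴴ := by
    simpa only [conjTranspose_mul, hP, Matrix.mul_assoc] using congrArg conjTranspose (hE i)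
  rw [krausMap, Finset.mul_sum, Finset.sum_mul]
  refine Finset.sum_congr rfl fun i _ => ?_
  calc P * (E i * (P * X * P) * (E i)ᴴ) * P = (P * E i * P) * X * (P * (E i)ᴴ * P) := by
        simp only [Matrix.mul_assoc]
    _ = E i * (P * X * P) * (E i)ᴴ := by
        rw [hE i, hE' i]
        simp only [Matrix.mul_assoc]

variable [RCLike 𝕜] [Fintype m]

open scoped ComplexOrder MatrixOrder in
lemma Matrix.eq_zero_of_sum_mul_conjTranspose_eq_zero {A : ι → Matrix m n 𝕜}
    (h : ∑ i, A i * (A i)ᴴ = 0) (i : ι) : A i = 0 := by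
  have hnonneg : ∀ j ∈ Finset.univ, 0 ≤ A j * (A j)ᴴ := fun j _ =>
    (posSemidef_self_mul_conjTranspose (A j)).nonneg
  exact self_mul_conjTranspose_eq_zero.1
    ((Finset.sum_eq_zero_iff_of_nonneg hnonneg).1 h i (Finset.mem_univ i))

lemma IsStarProjection.mul_mul_eq_of_mul_krausMap_mul_eq [DecidableEq n]
    {E : ι → Matrix n n 𝕜} {P : Matrix n n 𝕜} (hP : IsStarProjection P)
    (h : P * krausMap E P * P = krausMap E P) (i : ι) :
    P * E i * P = E i * P := by
  have hPH : Pᴴ = P := hP.isSelfAdjoint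
  have hterm (j : ι) : ((1 - P) * E j * P) * ((1 - P) * E j * P)ᴴ =
      (1 - P) * (E j * P * (E j)ᴴ) * (1 - P) := by
    simp only [conjTranspose_mul, conjTranspose_sub, conjTranspose_one, hPH, Matrix.mul_assoc]
    rw [← Matrix.mul_assoc P P, hP.isIdempotentElem.eq]
  have hsum : ∑ j, ((1 - P) * E j * P) * ((1 - P) * E j * P)ᴴ = 0 := calc
    _ = (1 - P) * krausMap E P * (1 - P) := by
      simp only [hterm, krausMap, Finset.mul_sum, Finset.sum_mul]
    _ = (1 - P) * (P * krausMap E P * P) * (1 - P) := by rw [h]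
    _ = ((1 - P) * P) * krausMap E P * (P * (1 - P)) := by simp only [Matrix.mul_assoc]
    _ = 0 := by rw [hP.one_sub_mul_self, hP.mul_one_sub_self, Matrix.zero_mul, Matrix.mul_zero]
  have := eq_zero_of_sum_mul_conjTranspose_eq_zero hsum i
  rwa [Matrix.sub_mul, Matrix.sub_mul, Matrix.one_mul, sub_eq_zero, eq_comm] at this

lemma Matrix.exists_isStarProjection_range_mulVecLin_eq [DecidableEq n]
    (U : Submodule 𝕜 (n → 𝕜)) :
    ∃ P : Matrix n n 𝕜, IsStarProjection P ∧ LinearMap.range P.mulVecLin = U := by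
  let K : Submodule 𝕜 (EuclideanSpace 𝕜 n) :=
    U.comap (WithLp.linearEquiv 2 𝕜 (n → 𝕜)).toLinearMap
  let P : Matrix n n 𝕜 := (toEuclideanCLM (𝕜 := 𝕜) (n := n)).symm K.starProjection
  have hP (x : n → 𝕜) : P.mulVecLin x = WithLp.ofLp (K.starProjection (WithLp.toLp 2 x)) := calc
    P.mulVecLin x = WithLp.ofLp (toEuclideanCLM (𝕜 := 𝕜) P (WithLp.toLp 2 x)) := rfl
    _ = _ := by rw [StarAlgEquiv.apply_symm_apply]
  refine ⟨P, isStarProjection_starProjection.map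
    (toEuclideanCLM (𝕜 := 𝕜) (n := n)).symm, le_antisymm ?_ fun u hu => ⟨u, ?_⟩⟩
  · rintro _ ⟨x, rfl⟩
    rw [hP]
    exact K.starProjection_apply_mem _
  · rw [hP, K.starProjection_eq_self_iff.2 hu]

end Kraus

/-- A completely positive map `Φ(X) = ∑ i, E_i X E_i*` is irreducible (the only
orthogonal projections `P` with `Φ(P M(n,ℂ) P) ⊆ P M(n,ℂ) P` are `0` and `1`) iff
the matrix space spanned by its Choi–Kraus operators is irreducible, i.e. has no
invariant subspace of `ℂ^n` (column vectors, acted on from the left) other than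
`0` and `ℂ^n`. -/
theorem stmt_18 (n m : ℕ) (Es : Fin m → Matrix (Fin n) (Fin n) ℂ) :
    (∀ P : Matrix (Fin n) (Fin n) ℂ, P * P = P → Pᴴ = P →
        (∀ X : Matrix (Fin n) (Fin n) ℂ,
          P * (∑ i, Es i * (P * X * P) * (Es i)ᴴ) * P =
            ∑ i, Es i * (P * X * P) * (Es i)ᴴ) →
        P = 0 ∨ P = 1) ↔
      (∀ U : Submodule ℂ (Fin n → ℂ),
        (∀ B ∈ Submodule.span ℂ (Set.range Es), ∀ u ∈ U, Matrix.mulVec B u ∈ U) →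
          U = ⊥ ∨ U = ⊤) := by
  have invariant_iff (U : Submodule ℂ (Fin n → ℂ)) :
      (∀ B ∈ Submodule.span ℂ (Set.range Es), ∀ u ∈ U, B *ᵥ u ∈ U) ↔
        ∀ i, U ∈ Module.End.invtSubmodule (Es i).mulVecLin :=
    forall_mem_span_mem_invtSubmodule_iff.trans Set.forall_mem_range
  constructor
  · intro hΦ U hU
    obtain ⟨P, hP, rfl⟩ := exists_isStarProjection_range_mulVecLin_eq U
    have hPE (i : Fin m) : P * Es i * P = Es i * P :=
      (range_mulVecLin_mem_invtSubmodule_iff hP.isIdempotentElem).1 ((invariant_iff _).1 hU i)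
    rcases hΦ P hP.isIdempotentElem hP.isSelfAdjoint
      (mul_krausMap_mul_eq_of_mul_mul_eq hP.isSelfAdjoint hPE) with rfl | rfl
    · exact .inl (range_mulVecLin_eq_bot_iff.2 rfl)
    · exact .inr (IsIdempotentElem.one.range_mulVecLin_eq_top_iff.2 rfl)
  · intro hU P hPP hPH hΦ
    have hP : IsStarProjection P := ⟨hPP, hPH⟩
    have hPE := hP.mul_mul_eq_of_mul_krausMap_mul_eq
      (by simpa only [krausMap, Matrix.mul_one, hPP] using hΦ 1)
    rcases hU _ ((invariant_iff _).2 fun i =>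
      (range_mulVecLin_mem_invtSubmodule_iff hPP).2 (hPE i)) with h | h
    · exact .inl (range_mulVecLin_eq_bot_iff.1 h)
    · exact .inr (hP.isIdempotentElem.range_mulVecLin_eq_top_iff.1 h)
end

section
/- Let G = ([n], E) be a bipartite graph and S_G ≤ M(m×n, F) its graphical matrix space, with m ≤ n. For each r ∈ [m], the maximum of |V_1| + |V_2| over V_1 ⊆ [m], V_2 ⊆ [n] such that the induced subgraph G[V_1 ∪ V_2] has matching number at most r equals the maximum of dim L + dim R over subspaces L ≤ F^m, R ≤ F^n such that every matrix in the induced subspace S_G[L, R] = { T_L B T_Rᵗ : B ∈ S_G } has rank at most r, where the rows of T_L span L and the rows of T_R span R. -/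
open Matrix

/-!
If `T_L`, `T_R` select the coordinates in `V₁`, `V₂`, then `S_G[L, R]` is the graphical space of
the induced subgraph. A matrix of rank `k` there has a nonsingular `k × k` minor, hence a nonzero
term in the Leibniz expansion of that minor, i.e. a matching of size `k` in its support.

Conversely, if `T_L` has full row rank `s`, some `s` of its columns form an invertible matrix `P`,
and similarly `Q` for `T_R`. Let `V₁`, `V₂` be the vertex sets indexing these columns. For a
matching `M` of `G[V₁ ∪ V₂]`, its 0/1 matrix `B ∈ S_G` satisfies `T_L B T_Rᵗ = P B' Qᵗ`, where `B'`
is `B` restricted to `V₁ × V₂`, so this matrix has rank `|M|`.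
-/

namespace Matrix

variable {F : Type*} [Field F] {l m n o m' n' : Type*}

lemma exists_linearIndependent_cols_of_rank_eq [Fintype n] (A : Matrix m n F) {k : ℕ}
    (hk : A.rank = k) :
    ∃ g : Fin k → n, Function.Injective g ∧ LinearIndependent F (A.submatrix id g).col := by
  obtain ⟨κ, a, ha, hspan, hli⟩ := exists_linearIndependent' F A.col
  have : Finite κ := Finite.of_injective a ha
  have : Fintype κ := Fintype.ofFinite κ
  have hcard : Fintype.card κ = k := by
    rw [← hk, rank_eq_finrank_span_cols, ← hspan, finrank_span_eq_card hli]
  let e := Fintype.equivFinOfCardEq hcard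
  exact ⟨a ∘ e.symm, ha.comp e.symm.injective, hli.comp e.symm e.symm.injective⟩

lemma exists_isUnit_det_submatrix [Fintype m] [Fintype n] (A : Matrix m n F) :
    ∃ (f : Fin A.rank → m) (g : Fin A.rank → n), Function.Injective f ∧
      Function.Injective g ∧ IsUnit (A.submatrix f g).det := by
  obtain ⟨g, hg, hgli⟩ := A.exists_linearIndependent_cols_of_rank_eq rfl
  have hrank : (A.submatrix id g)ᵀ.rank = A.rank := by
    rw [LinearIndependent.rank_matrix (by rwa [row_transpose]), Fintype.card_fin]
  obtain ⟨f, hf, hfli⟩ := (A.submatrix id g)ᵀ.exists_linearIndependent_cols_of_rank_eq hrank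
  exact ⟨f, g, hf, hg, (isUnit_iff_isUnit_det _).mp (linearIndependent_rows_iff_isUnit.mp hfli)⟩

lemma exists_perm_forall_apply_ne_zero_of_det_ne_zero [Fintype n] [DecidableEq n]
    {A : Matrix n n F} (hA : A.det ≠ 0) : ∃ σ : Equiv.Perm n, ∀ i, A (σ i) i ≠ 0 := by
  by_contra! h
  refine hA (det_apply A ▸ Finset.sum_eq_zero fun σ _ => ?_)
  obtain ⟨i, hi⟩ := h σ
  exact smul_eq_zero_of_right _ (Finset.prod_eq_zero (Finset.mem_univ i) hi)

lemma exists_injective_apply_ne_zero [Fintype m] [Fintype n] (A : Matrix m n F) :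
    ∃ (f : Fin A.rank → m) (g : Fin A.rank → n), Function.Injective f ∧
      Function.Injective g ∧ ∀ i, A (f i) (g i) ≠ 0 := by
  obtain ⟨f, g, hf, hg, hdet⟩ := A.exists_isUnit_det_submatrix
  obtain ⟨σ, hσ⟩ := exists_perm_forall_apply_ne_zero_of_det_ne_zero hdet.ne_zero
  exact ⟨f ∘ σ, g, hf.comp σ.injective, hg, hσ⟩

lemma rank_one_submatrix_of_injective [Fintype m] [DecidableEq m] [Fintype m'] {φ : m' → m}
    (hφ : Function.Injective φ) : ((1 : Matrix m m F).submatrix φ id).rank = Fintype.card m' :=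
  LinearIndependent.rank_matrix ((linearIndependent_rows_iff_isUnit.mpr isUnit_one).comp φ hφ)

lemma one_submatrix_mul_mul_transpose [Fintype m] [Fintype n] [DecidableEq m] [DecidableEq n]
    (B : Matrix m n F) (φ : m' → m) (ψ : n' → n) :
    (1 : Matrix m m F).submatrix φ id * B * ((1 : Matrix n n F).submatrix ψ id)ᵀ =
      B.submatrix φ ψ := by
  ext i j
  simp [mul_apply, one_apply]

lemma mul_mul_transpose_eq_of_support [Fintype m] [Fintype n] [Fintype m'] [Fintype n']
    (X : Matrix l m F) (Y : Matrix o n F) {B : Matrix m n F} {φ : m' → m} {ψ : n' → n}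
    (hφ : Function.Injective φ) (hψ : Function.Injective ψ)
    (hB : ∀ i j, B i j ≠ 0 → i ∈ Set.range φ ∧ j ∈ Set.range ψ) :
    X * B * Yᵀ = X.submatrix id φ * B.submatrix φ ψ * (Y.submatrix id ψ)ᵀ := by
  ext x y
  simp only [mul_apply, submatrix_apply, transpose_apply, id_eq]
  have hrow : ∀ j, ∑ a, X x (φ a) * B (φ a) j = ∑ i, X x i * B i j := fun j =>
    Fintype.sum_of_injective φ hφ _ _ (fun i hi => by
      rw [not_ne_iff.mp fun h => hi (hB i j h).1, mul_zero]) fun _ => rfl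
  refine (Fintype.sum_of_injective ψ hψ _ _ (fun j hj => ?_) fun b => by rw [hrow]).symm
  rw [Finset.sum_eq_zero fun i _ => by rw [not_ne_iff.mp fun h => hj (hB i j h).2, mul_zero],
    zero_mul]

lemma rank_submatrix_of_support [Fintype m] [Fintype n] [DecidableEq m] [DecidableEq n]
    [Fintype m'] [Fintype n'] {B : Matrix m n F} {φ : m' → m} {ψ : n' → n}
    (hφ : Function.Injective φ) (hψ : Function.Injective ψ)
    (hB : ∀ i j, B i j ≠ 0 → i ∈ Set.range φ ∧ j ∈ Set.range ψ) :
    (B.submatrix φ ψ).rank = B.rank := by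
  refine le_antisymm (rank_submatrix_le _ _ _) ?_
  calc B.rank = ((1 : Matrix m m F) * B * (1 : Matrix n n F)ᵀ).rank := by simp
    _ ≤ _ := by
      rw [mul_mul_transpose_eq_of_support 1 1 hφ hψ hB]
      exact (rank_mul_le_left _ _).trans (rank_mul_le_right _ _)

end Matrix

section

variable {F : Type*} [Field F] {m n : ℕ}

lemma apply_eq_zero_of_mem_graphSpace {E : Finset (Fin m × Fin n)}
    {B : Matrix (Fin m) (Fin n) F} (hB : B ∈ graphSpace F E) {i : Fin m} {j : Fin n}
    (hij : (i, j) ∉ E) : B i j = 0 := by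
  induction hB using Submodule.span_induction with
  | mem x hx =>
    obtain ⟨e, he, rfl⟩ := hx
    simp only [single_apply, ite_eq_right_iff, one_ne_zero, imp_false, not_and]
    rintro rfl rfl
    exact hij he
  | zero => rfl
  | add x y _ _ hx hy => simp [hx, hy]
  | smul a x _ hx => simp [hx]

lemma isMatching_image_of_injective_s19 {ι : Type*} [Fintype ι] [DecidableEq ι] {f : ι → Fin m}
    {g : ι → Fin n} (hf : Function.Injective f) (hg : Function.Injective g) :
    IsMatching (Finset.univ.image fun i => (f i, g i)) := by
  simp only [IsMatching, Finset.mem_image, Finset.mem_univ, true_and]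
  rintro _ ⟨a, rfl⟩ _ ⟨b, rfl⟩ hab
  have hab : a ≠ b := fun h => hab (h ▸ rfl)
  exact ⟨hf.ne hab, hg.ne hab⟩

lemma IsMatching.eq_of_mem {M : Finset (Fin m × Fin n)} (hM : IsMatching M)
    {e f : Fin m × Fin n} (he : e ∈ M) (hf : f ∈ M) (hef : (e.1, f.2) ∈ M) : e = f := by
  have hfst : (e.1, f.2) = e := by_contra fun h => (hM _ hef e he h).1 rfl
  exact by_contra fun h => (hM e he f hf h).2 (congrArg Prod.snd hfst).symm

variable (F) in
noncomputable def matchingMatrix (M : Finset (Fin m × Fin n)) : Matrix (Fin m) (Fin n) F :=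
  ∑ e ∈ M, single e.1 e.2 1

lemma matchingMatrix_apply (M : Finset (Fin m × Fin n)) (i : Fin m) (j : Fin n) :
    matchingMatrix F M i j = if (i, j) ∈ M then 1 else 0 := by
  have hpair : ∀ e : Fin m × Fin n, (e.1 = i ∧ e.2 = j) ↔ e = (i, j) := fun e =>
    ⟨fun h => Prod.ext h.1 h.2, fun h => h ▸ ⟨rfl, rfl⟩⟩
  simp only [matchingMatrix, Matrix.sum_apply, single_apply, hpair, Finset.sum_ite_eq']

lemma matchingMatrix_mem_graphSpace {E M : Finset (Fin m × Fin n)} (hM : M ⊆ E) :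
    matchingMatrix F M ∈ graphSpace F E :=
  Submodule.sum_mem _ fun e he => Submodule.subset_span ⟨e, hM he, rfl⟩

lemma IsMatching.card_le_rank_matchingMatrix {M : Finset (Fin m × Fin n)} (hM : IsMatching M) :
    M.card ≤ (matchingMatrix F M).rank := by
  let w : Fin M.card → Fin m × Fin n := fun a => M.equivFin.symm a
  have hw : ∀ a, w a ∈ M := fun a => (M.equivFin.symm a).2
  have hdiag : (matchingMatrix F M).submatrix (fun a => (w a).1) (fun b => (w b).2) = 1 := by
    ext a b
    rw [submatrix_apply, matchingMatrix_apply, one_apply]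
    refine if_congr ⟨fun hab => ?_, fun hab => hab ▸ hw a⟩ rfl rfl
    exact M.equivFin.symm.injective (Subtype.ext (hM.eq_of_mem (hw a) (hw b) hab))
  calc M.card = (1 : Matrix (Fin M.card) (Fin M.card) F).rank := by
        rw [rank_one, Fintype.card_fin]
    _ ≤ _ := hdiag ▸ rank_submatrix_le _ _ _

theorem rank_submatrix_le_of_matching_le {E : Finset (Fin m × Fin n)} {V₁ : Finset (Fin m)}
    {V₂ : Finset (Fin n)} {r : ℕ}
    (hV : ∀ M ⊆ E, (∀ e ∈ M, e.1 ∈ V₁ ∧ e.2 ∈ V₂) → IsMatching M → M.card ≤ r)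
    {ι κ : Type*} [Fintype ι] [Fintype κ] {φ : ι → Fin m} {ψ : κ → Fin n}
    (hφ : Function.Injective φ) (hψ : Function.Injective ψ) (hφV : ∀ a, φ a ∈ V₁)
    (hψV : ∀ b, ψ b ∈ V₂) {B : Matrix (Fin m) (Fin n) F} (hB : B ∈ graphSpace F E) :
    (B.submatrix φ ψ).rank ≤ r := by
  obtain ⟨f, g, hf, hg, hne⟩ := (B.submatrix φ ψ).exists_injective_apply_ne_zero
  have hinj : Function.Injective fun i => (φ (f i), ψ (g i)) :=
    fun i j h => hf (hφ (congrArg Prod.fst h))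
  have hcard := hV (Finset.univ.image fun i => (φ (f i), ψ (g i)))
    (fun e he => by
      obtain ⟨i, -, rfl⟩ := Finset.mem_image.mp he
      exact by_contra fun h => hne i (apply_eq_zero_of_mem_graphSpace hB h))
    (fun e he => by
      obtain ⟨i, -, rfl⟩ := Finset.mem_image.mp he
      exact ⟨hφV _, hψV _⟩)
    (isMatching_image_of_injective_s19 (hφ.comp hf) (hψ.comp hg))
  rwa [Finset.card_image_of_injective _ hinj, Finset.card_univ, Fintype.card_fin] at hcard

theorem card_le_of_rank_le {ι κ : Type*} [Fintype ι] [Fintype κ] [DecidableEq ι] [DecidableEq κ]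
    {TL : Matrix ι (Fin m) F} {TR : Matrix κ (Fin n) F} {φ : ι → Fin m} {ψ : κ → Fin n}
    (hφ : Function.Injective φ) (hψ : Function.Injective ψ)
    (hP : LinearIndependent F (TL.submatrix id φ).col)
    (hQ : LinearIndependent F (TR.submatrix id ψ).col) {E : Finset (Fin m × Fin n)} {r : ℕ}
    (hrank : ∀ B ∈ graphSpace F E, (TL * B * TRᵀ).rank ≤ r) {M : Finset (Fin m × Fin n)}
    (hME : M ⊆ E) (hMV : ∀ e ∈ M, e.1 ∈ Finset.univ.image φ ∧ e.2 ∈ Finset.univ.image ψ)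
    (hM : IsMatching M) : M.card ≤ r := by
  have hsupp : ∀ i j, matchingMatrix F M i j ≠ 0 → i ∈ Set.range φ ∧ j ∈ Set.range ψ := by
    intro i j hij
    rw [matchingMatrix_apply, ne_eq, ite_eq_right_iff, not_forall] at hij
    obtain ⟨hi, hj⟩ := hMV _ hij.1
    simpa using And.intro hi hj
  have hPdet := (isUnit_iff_isUnit_det _).mp (linearIndependent_cols_iff_isUnit.mp hP)
  have hQdet := (isUnit_iff_isUnit_det _).mp (linearIndependent_cols_iff_isUnit.mp hQ)
  calc M.card ≤ (matchingMatrix F M).rank := hM.card_le_rank_matchingMatrix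
    _ = ((matchingMatrix F M).submatrix φ ψ).rank := (rank_submatrix_of_support hφ hψ hsupp).symm
    _ = (TL * matchingMatrix F M * TRᵀ).rank := by
      rw [mul_mul_transpose_eq_of_support TL TR hφ hψ hsupp,
        rank_mul_eq_left_of_isUnit_det _ _ (by rwa [det_transpose]),
        rank_mul_eq_right_of_isUnit_det _ _ hPdet]
    _ ≤ r := hrank _ (matchingMatrix_mem_graphSpace hME)

end

theorem stmt_19_general (F : Type*) [Field F] (m n : ℕ)
    (E : Finset (Fin m × Fin n)) (r : ℕ) :
    sSup {k : ℕ | ∃ (V₁ : Finset (Fin m)) (V₂ : Finset (Fin n)),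
        (∀ M ⊆ E, (∀ e ∈ M, e.1 ∈ V₁ ∧ e.2 ∈ V₂) → IsMatching M → M.card ≤ r) ∧
        V₁.card + V₂.card = k} =
      sSup {d : ℕ | ∃ (s t : ℕ) (TL : Matrix (Fin s) (Fin m) F)
          (TR : Matrix (Fin t) (Fin n) F),
        TL.rank = s ∧ TR.rank = t ∧
        (∀ B ∈ graphSpace F E, (TL * B * TRᵀ).rank ≤ r) ∧ s + t = d} := by
  congr 1
  ext d
  constructor
  · rintro ⟨V₁, V₂, hV, rfl⟩
    let φ := V₁.orderEmbOfFin rfl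
    let ψ := V₂.orderEmbOfFin rfl
    refine ⟨_, _, (1 : Matrix _ _ F).submatrix φ id, (1 : Matrix _ _ F).submatrix ψ id,
      ?_, ?_, fun B hB => ?_, rfl⟩
    · rw [rank_one_submatrix_of_injective φ.injective, Fintype.card_fin]
    · rw [rank_one_submatrix_of_injective ψ.injective, Fintype.card_fin]
    · rw [one_submatrix_mul_mul_transpose]
      exact rank_submatrix_le_of_matching_le hV φ.injective ψ.injective
        (V₁.orderEmbOfFin_mem rfl) (V₂.orderEmbOfFin_mem rfl) hB
  · rintro ⟨s, t, TL, TR, hs, ht, hrank, rfl⟩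
    obtain ⟨φ, hφ, hP⟩ := TL.exists_linearIndependent_cols_of_rank_eq hs
    obtain ⟨ψ, hψ, hQ⟩ := TR.exists_linearIndependent_cols_of_rank_eq ht
    refine ⟨Finset.univ.image φ, Finset.univ.image ψ,
      fun M hME hMV hM => card_le_of_rank_le hφ hψ hP hQ hrank hME hMV hM, ?_⟩
    rw [Finset.card_image_of_injective _ hφ, Finset.card_image_of_injective _ hψ]
    simp

/-- The maximum order `|V₁| + |V₂|` of an induced subgraph of `G` with matching number
at most `r` equals the maximum order `dim L + dim R` over subspaces `L ≤ F^m`, `R ≤ F^n`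
such that every matrix of the induced subspace `S_G[L,R] = { T_L B T_Rᵗ : B ∈ S_G }` has
rank at most `r`; here `T_L` (resp. `T_R`) is a matrix of full row rank whose rows form
a basis of `L` (resp. `R`). -/
theorem stmt_19 (F : Type*) [Field F] (m n : ℕ) (hmn : m ≤ n)
    (E : Finset (Fin m × Fin n)) (r : ℕ) (hr1 : 1 ≤ r) (hrm : r ≤ m) :
    sSup {k : ℕ | ∃ (V₁ : Finset (Fin m)) (V₂ : Finset (Fin n)),
        (∀ M ⊆ E, (∀ e ∈ M, e.1 ∈ V₁ ∧ e.2 ∈ V₂) → IsMatching M → M.card ≤ r) ∧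
        V₁.card + V₂.card = k} =
      sSup {d : ℕ | ∃ (s t : ℕ) (TL : Matrix (Fin s) (Fin m) F)
          (TR : Matrix (Fin t) (Fin n) F),
        TL.rank = s ∧ TR.rank = t ∧
        (∀ B ∈ graphSpace F E, (TL * B * TRᵀ).rank ≤ r) ∧ s + t = d} :=
  stmt_19_general F m n E r
end
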